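/- arXiv:0901.2394 — 10 statements merged into one kernel-verified Lean document; each statement's English description precedes it below -/
import Mathlib

section
/- Let R be a Noetherian commutative ring of prime characteristic p and I an ideal of R. Then there exists a positive integer c such that for every q = p^e and every minimal prime P over I, the isolated primary component Q = I^{[q]} R_P ∩ R of the Frobenius power I^{[q]} satisfies P^{c·q} ⊆ Q. -/
/-!
Since `P` is minimal over `I`, every `y ∈ P` satisfies `s * y ^ m ∈ I` for some `s ∉ P` and
some `m`: otherwise `I` would be contained in a prime avoiding both `R ∖ P` and the powers of `y`,
i.e. a prime strictly between `I` and `P`. One exponent `m` serves the finitely many generators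
of `P`, and if there are `N` of them, every product of `N * k + 1` generators is divisible by the
`k`-th power of one of them. Hence `P ^ (N * m * q + 1)` lies in the ideal generated by the
`y ^ (m * q)`, which the product of the `q`-th powers of the `s`'s carries into `I^{[q]}`. The
exponent is linear in `q`, and there are only finitely many minimal primes.
-/

open Filter

namespace Ideal

theorem span_pow_card_mul_add_one_le {R : Type*} [CommSemiring R] (t : Finset R) (k : ℕ) :
    span (t : Set R) ^ (t.card * k + 1) ≤ span ((· ^ k) '' (t : Set R)) := by
  classical
  induction t using Finset.induction_on with
  | empty => simp
  | insert a t ha ih =>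
    rw [Finset.card_insert_of_notMem ha, Finset.coe_insert, Set.image_insert_eq, span_insert,
      span_insert, add_mul, one_mul, add_right_comm, add_comm]
    refine sup_pow_add_le_pow_sup_pow.trans (sup_le_sup ?_ ih)
    rw [span_singleton_pow]

variable {R : Type*} [CommSemiring R] {I P : Ideal R}

theorem exists_notMem_mul_pow_mem_of_mem_minimalPrimes (hP : P ∈ I.minimalPrimes) {x : R}
    (hx : x ∈ P) : ∃ s ∉ P, ∃ m : ℕ, s * x ^ m ∈ I := by
  have := hP.1.1
  by_contra! h
  have hdisj : Disjoint (I : Set R) ↑(P.primeCompl ⊔ Submonoid.powers x) := by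
    rw [Set.disjoint_right]
    rintro _ hy hyI
    obtain ⟨s, hs, _, ⟨m, rfl⟩, rfl⟩ := Submonoid.mem_sup.mp hy
    exact h s hs m hyI
  obtain ⟨Q, hQ, hIQ, hQdisj⟩ := I.exists_le_prime_disjoint _ hdisj
  have hQP : Q ≤ P := fun y hyQ ↦ by_contra fun hyP ↦
    Set.disjoint_left.mp hQdisj hyQ (le_sup_left (b := Submonoid.powers x) hyP)
  exact Set.disjoint_left.mp hQdisj (hP.2 ⟨hQ, hIQ⟩ hQP hx)
    (Submonoid.mem_sup_right (Submonoid.mem_powers x))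

theorem eventually_exists_notMem_mul_pow_mem (hP : P ∈ I.minimalPrimes) {x : R} (hx : x ∈ P) :
    ∀ᶠ m in atTop, ∃ s ∉ P, s * x ^ m ∈ I := by
  obtain ⟨s, hs, m, hm⟩ := exists_notMem_mul_pow_mem_of_mem_minimalPrimes hP hx
  filter_upwards [eventually_ge_atTop m] with n hn
  refine ⟨s, hs, ?_⟩
  rw [← Nat.sub_add_cancel hn, pow_add, mul_left_comm]
  exact I.mul_mem_left _ hm

theorem eventually_exists_notMem_mul_mem_span_image_pow [IsNoetherianRing R]
    (hP : P ∈ I.minimalPrimes) :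
    ∀ᶠ c in atTop, ∀ q : ℕ, ∀ x ∈ P ^ (c * q),
      ∃ s ∉ P, s * x ∈ span ((· ^ q) '' (I : Set R)) := by
  have := hP.1.1
  obtain ⟨t, ht⟩ := (IsNoetherian.noetherian P : P.FG)
  obtain ⟨m, hm⟩ := ((Finset.eventually_all t).2 fun y hy ↦
    eventually_exists_notMem_mul_pow_mem hP (ht.le (subset_span hy))).exists
  choose! s hsP hs using hm
  filter_upwards [eventually_gt_atTop (t.card * m)] with c hc q x hx
  rcases q.eq_zero_or_pos with rfl | hq
  · have h1 : (1 : R) ∈ span ((· ^ 0) '' (I : Set R)) := subset_span ⟨0, I.zero_mem, pow_zero 0⟩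
    refine ⟨1, P.primeCompl.one_mem, ?_⟩
    rw [one_mul, ← mul_one x]
    exact mul_mem_left _ x h1
  refine ⟨∏ y ∈ t, s y ^ q, P.primeCompl.prod_mem fun y hy ↦ pow_mem (hsP y hy) q, ?_⟩
  have hx' : x ∈ span ((· ^ (m * q)) '' (t : Set R)) := by
    rw [← ht] at hx
    exact span_pow_card_mul_add_one_le t (m * q) (pow_le_pow_right (by nlinarith) hx)
  rw [mul_comm, ← smul_eq_mul, ← Submodule.mem_colon_singleton]
  refine span_le.2 ?_ hx'
  rintro _ ⟨y, hy, rfl⟩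
  rw [SetLike.mem_coe, Submodule.mem_colon_singleton, smul_eq_mul]
  refine mem_of_dvd _ ?_ (subset_span ⟨s y * y ^ m, hs y hy, rfl⟩)
  show (s y * y ^ m) ^ q ∣ y ^ (m * q) * ∏ y ∈ t, s y ^ q
  rw [mul_pow, ← pow_mul, mul_comm]
  exact mul_dvd_mul_left _ (Finset.dvd_prod_of_mem (s · ^ q) hy)

end Ideal

theorem stmt0_general {R : Type*} [CommRing R] [IsNoetherianRing R] (p : ℕ)
    (I : Ideal R) :
    ∃ c : ℕ, 0 < c ∧ ∀ e : ℕ, ∀ P ∈ I.minimalPrimes,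
      ∀ x ∈ P ^ (c * p ^ e),
        ∃ s ∉ P, s * x ∈ Ideal.span ((fun a => a ^ (p ^ e)) '' (I : Set R)) := by
  have hfin : I.minimalPrimes.Finite := I.finite_minimalPrimes_of_isNoetherianRing R
  obtain ⟨c, hc, hcI⟩ := ((eventually_gt_atTop 0).and (hfin.eventually_all.2 fun P hP ↦
    Ideal.eventually_exists_notMem_mul_mem_span_image_pow hP)).exists
  exact ⟨c, hc, fun e P hP ↦ hcI P hP (p ^ e)⟩

/-- For a Noetherian commutative ring `R` of prime characteristic `p` and an
ideal `I`, there is a positive integer `c` such that for every `q = p^e` and every prime `P`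
minimal over `I`, the isolated primary component `Q = I^{[q]} R_P ∩ R` of the Frobenius power
`I^{[q]}` (whose elements are exactly those `x` with `s * x ∈ I^{[q]}` for some `s ∉ P`)
contains `P^(c*q)`. -/
theorem stmt0 {R : Type*} [CommRing R] [IsNoetherianRing R] (p : ℕ) (hp : p.Prime)
    [CharP R p] (I : Ideal R) :
    ∃ c : ℕ, 0 < c ∧ ∀ e : ℕ, ∀ P ∈ I.minimalPrimes,
      ∀ x ∈ P ^ (c * p ^ e),
        ∃ s ∉ P, s * x ∈ Ideal.span ((fun a => a ^ (p ^ e)) '' (I : Set R)) :=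
  stmt0_general p I
end

section
/- Let R be a Noetherian ring, J an ideal, and z an element of R. If J : z^∞ = J : z^N for some N, then J = (J + R z^N) ∩ (J : z^∞). -/
/-!
If `x = j + r a` lies in `J : a` with `j ∈ J`, then `r a² = x a - j a ∈ J`, so `r ∈ J : a² = J : a`
and hence `x ∈ J`. Apply this with `a = z^N`, where `J : z^{2N} ⊆ J : z^∞ = J : z^N`.
-/

namespace Ideal

variable {R : Type*} [CommRing R]

theorem sup_span_singleton_inf_colon_le (J : Ideal R) (a : R)
    (h : J.colon (span {a ^ 2}) ≤ J.colon (span {a})) :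
    (J ⊔ span {a}) ⊓ J.colon (span {a}) ≤ J := by
  rintro x ⟨hx_sup, hx_colon⟩
  rw [SetLike.mem_coe, mem_colon_span_singleton] at hx_colon
  obtain ⟨j, hj, _, hy, rfl⟩ := Submodule.mem_sup.mp hx_sup
  obtain ⟨r, rfl⟩ := mem_span_singleton'.mp hy
  have hr_sq : r * a ^ 2 ∈ J := by
    have hdiff := J.sub_mem hx_colon (J.mul_mem_right a hj)
    rwa [show (j + r * a) * a - j * a = r * a ^ 2 by ring] at hdiff
  have hr : r * a ∈ J := mem_colon_span_singleton.mp (h (mem_colon_span_singleton.mpr hr_sq))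
  exact J.add_mem hj hr

end Ideal

theorem stmt2_general {R : Type*} [CommRing R] (J : Ideal R) (z : R) (N : ℕ)
    (hN : (⨆ n : ℕ, J.colon (Ideal.span {z ^ n})) = J.colon (Ideal.span {z ^ N})) :
    J = (J ⊔ Ideal.span {z ^ N}) ⊓ ⨆ n : ℕ, J.colon (Ideal.span {z ^ n}) := by
  have colon_le_iSup (n : ℕ) := le_iSup (fun m : ℕ => J.colon (Ideal.span {z ^ m})) n
  refine le_antisymm (le_inf le_sup_left (Ideal.le_colon.trans (colon_le_iSup 0))) ?_
  rw [hN]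
  refine Ideal.sup_span_singleton_inf_colon_le J (z ^ N) ?_
  rw [← pow_mul, ← hN]
  exact colon_le_iSup _

/-- If `J : z^∞ = J : z^N` for some `N`, then
`J = (J + R z^N) ∩ (J : z^∞)`. -/
theorem stmt2 {R : Type*} [CommRing R] [IsNoetherianRing R] (J : Ideal R) (z : R) (N : ℕ)
    (hN : (⨆ n : ℕ, J.colon (Ideal.span {z ^ n})) = J.colon (Ideal.span {z ^ N})) :
    J = (J ⊔ Ideal.span {z ^ N}) ⊓ ⨆ n : ℕ, J.colon (Ideal.span {z ^ n}) :=
  stmt2_general J z N hN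
end

section
/- Let R be a commutative domain with fraction field K, let A = (a_{ij}) be a k × l matrix with entries in R, and let b_1, …, b_l ∈ K be such that for each i the element a_{i1} b_1 + ⋯ + a_{il} b_l lies in R and is divisible in R by every nonzero minor (of every size) of the matrix A. Then there exist b'_1, …, b'_l ∈ R with a_{i1} b_1 + ⋯ + a_{il} b_l = a_{i1} b'_1 + ⋯ + a_{il} b'_l for all i = 1, …, k. -/
/-!
Pick a nonzero minor `d = det A[I, J]` of maximal size `r`. Expanding each vanishing
`(r+1)`-minor `A[I ∪ {i}, J ∪ {j}]` along its last column gives `d • A = E * A[I, -]` for a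
matrix `E` over `R`. Applied to `A b = s` over `K`, this yields `d • s = E (s|_I)`. Since `d`
divides `s|_I`, Cramer's rule solves `A[I, J] x = s|_I` over `R`; extending `x` by zero outside `J`
gives `b'` with `A[I, -] b' = s|_I`, hence `d • A b' = E (s|_I) = d • s`, and `d` cancels.
-/

open Function Matrix

namespace Matrix

variable {R : Type*} [CommRing R] {m n p : Type*}

theorem injective_left_of_det_submatrix_ne_zero [Fintype p] [DecidableEq p] (A : Matrix m n R)
    {row : p → m} {col : p → n} (h : (A.submatrix row col).det ≠ 0) : Injective row := by
  intro a b hab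
  by_contra hne
  exact h (det_zero_of_row_eq hne (funext fun j => by simp [hab]))

theorem injective_right_of_det_submatrix_ne_zero [Fintype p] [DecidableEq p] (A : Matrix m n R)
    {row : p → m} {col : p → n} (h : (A.submatrix row col).det ≠ 0) : Injective col := by
  intro a b hab
  by_contra hne
  exact h (det_zero_of_column_eq hne fun i => by simp [hab])

theorem exists_det_submatrix_ne_zero_and_forall_succ [Nontrivial R] [Fintype m]
    (A : Matrix m n R) :
    ∃ (r : ℕ) (row : Fin r → m) (col : Fin r → n), (A.submatrix row col).det ≠ 0 ∧
      ∀ (row' : Fin (r + 1) → m) (col' : Fin (r + 1) → n), (A.submatrix row' col').det = 0 := by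
  classical
  let P : ℕ → Prop := fun r => ∃ (row : Fin r → m) (col : Fin r → n), (A.submatrix row col).det ≠ 0
  have hP0 : P 0 := ⟨Fin.elim0, Fin.elim0, by simp⟩
  obtain ⟨row, col, hd⟩ := Nat.findGreatest_spec (P := P) (Nat.zero_le (Fintype.card m)) hP0
  refine ⟨_, row, col, hd, fun row' col' => ?_⟩
  by_contra h
  have hle : Nat.findGreatest P (Fintype.card m) + 1 ≤ Fintype.card m := by
    simpa using Fintype.card_le_of_injective _ (A.injective_left_of_det_submatrix_ne_zero h)
  exact Nat.findGreatest_is_greatest (Nat.lt_succ_self _) hle ⟨row', col', h⟩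

/-- Up to sign, the cofactors along the last column of the bordered matrix
`A[row ++ i, col ++ j]`; they do not depend on `j`. -/
def borderCofactor (A : Matrix m n R) {r : ℕ} (row : Fin r → m) (col : Fin r → n) :
    Matrix m (Fin r) R :=
  of fun i t =>
    -(-1) ^ ((t : ℕ) + r) * (A.submatrix (Fin.snoc row i ∘ t.castSucc.succAbove) col).det

theorem det_smul_eq_borderCofactor_mul {r : ℕ} (A : Matrix m n R) (row : Fin r → m)
    (col : Fin r → n) (h : ∀ i j, (A.submatrix (Fin.snoc row i) (Fin.snoc col j)).det = 0) :
    (A.submatrix row col).det • A = A.borderCofactor row col * A.submatrix row id := by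
  ext i j
  have H := det_succ_column (A.submatrix (Fin.snoc row i) (Fin.snoc col j)) (Fin.last r)
  rw [h, Fin.sum_univ_castSucc] at H
  simp only [submatrix_submatrix, submatrix_apply, Fin.snoc_last, Fin.snoc_castSucc,
    Fin.snoc_comp_castSucc, Fin.succAbove_last, Fin.val_last, Fin.val_castSucc,
    (Even.add_self r).neg_one_pow, one_mul] at H
  simp only [smul_apply, smul_eq_mul, mul_apply, borderCofactor, of_apply, submatrix_apply, id,
    neg_mul, Finset.sum_neg_distrib]
  simp only [mul_right_comm _ (A (row _) j)] at H
  linear_combination -H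

theorem smul_eq_mulVec_comp_of_map_mulVec_eq [Fintype n] [Fintype p] {S : Type*} [CommRing S]
    {f : R →+* S} (hf : Injective f) {A : Matrix m n R} {E : Matrix m p R} {row : p → m} {d : R}
    (hA : d • A = E * A.submatrix row id) {b : n → S} {s : m → R} (hs : A.map f *ᵥ b = f ∘ s) :
    d • s = E *ᵥ (s ∘ row) := by
  funext i
  apply hf
  calc f ((d • s) i) = f d * (A.map f *ᵥ b) i := by rw [congrFun hs i]; simp
    _ = ((d • A).map f *ᵥ b) i := by
        rw [show (d • A).map f = f d • A.map f by ext; simp, smul_mulVec]; rfl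
    _ = (E.map f *ᵥ ((A.map f *ᵥ b) ∘ row)) i := by
        rw [hA, Matrix.map_mul, ← mulVec_mulVec]; rfl
    _ = f ((E *ᵥ (s ∘ row)) i) := by rw [hs, RingHom.map_mulVec]; rfl

theorem mulVec_eq_of_smul_eq_mul [IsDomain R] [Fintype n] [Fintype p] {A : Matrix m n R}
    {E : Matrix m p R} {row : p → m} {d : R} (hd : d ≠ 0) (hA : d • A = E * A.submatrix row id)
    {s : m → R} (hs : d • s = E *ᵥ (s ∘ row)) {y : n → R}
    (hy : A.submatrix row id *ᵥ y = s ∘ row) :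
    A *ᵥ y = s := by
  apply smul_right_injective _ hd
  calc d • (A *ᵥ y) = (d • A) *ᵥ y := (smul_mulVec ..).symm
    _ = E *ᵥ (A.submatrix row id *ᵥ y) := by rw [hA, mulVec_mulVec]
    _ = d • s := by rw [hy, hs]

theorem exists_mulVec_eq_of_det_dvd [Fintype p] [DecidableEq p] (B : Matrix p p R) {v : p → R}
    (h : ∀ u, B.det ∣ v u) : ∃ x, B *ᵥ x = v := by
  choose w hw using h
  exact ⟨B.cramer w, by rw [mulVec_cramer]; funext u; simp [hw]⟩

end Matrix

/-- Let `R` be a domain with fraction field `K`, `A` a `k × l` matrix over `R`,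
and `b : Fin l → K` such that each `∑ j, A i j * b j` is (the image of) an element `s i` of `R`
divisible by every nonzero minor of `A`.  Then there are `b' : Fin l → R` with
`∑ j, A i j * b' j = s i` for all `i`. -/
theorem stmt3 {R : Type*} [CommRing R] [IsDomain R] {k l : ℕ}
    (A : Matrix (Fin k) (Fin l) R) (b : Fin l → FractionRing R) (s : Fin k → R)
    (hs : ∀ i, (∑ j, algebraMap R (FractionRing R) (A i j) * b j)
        = algebraMap R (FractionRing R) (s i))
    (hdiv : ∀ (m : ℕ) (row : Fin m → Fin k) (col : Fin m → Fin l),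
        Function.Injective row → Function.Injective col →
        (A.submatrix row col).det ≠ 0 → ∀ i, (A.submatrix row col).det ∣ s i) :
    ∃ b' : Fin l → R, ∀ i, ∑ j, A i j * b' j = s i := by
  obtain ⟨r, row, col, hd, hmax⟩ := A.exists_det_submatrix_ne_zero_and_forall_succ
  obtain ⟨x, hx⟩ := (A.submatrix row col).exists_mulVec_eq_of_det_dvd fun u =>
    hdiv r row col (A.injective_left_of_det_submatrix_ne_zero hd)
      (A.injective_right_of_det_submatrix_ne_zero hd) hd (row u)
  have hA := A.det_smul_eq_borderCofactor_mul row col fun i j => hmax _ _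
  have hEs := smul_eq_mulVec_comp_of_map_mulVec_eq (IsFractionRing.injective R (FractionRing R))
    hA (funext hs)
  have hcol : A.submatrix row id * (1 : Matrix (Fin l) (Fin l) R).submatrix id col =
      A.submatrix row col := mul_submatrix_one (Equiv.refl _) col _
  refine ⟨(1 : Matrix (Fin l) (Fin l) R).submatrix id col *ᵥ x,
    congrFun (mulVec_eq_of_smul_eq_mul hd hA hEs ?_)⟩
  rw [mulVec_mulVec, hcol]
  exact hx
end

section
/- Let k be a field and define polynomials P_n ∈ k[t] by P_0 = 1, P_1 = t, P_{n+1} = t P_n − P_{n−1} for n ≥ 1. Then for every n ≥ 1, in the polynomial ring k[t,x,y] one has x y^{n−1} P_{n−1} ∈ (x^n, y^n, x^2 + t x y + y^2). -/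
/-!
The `P_n` are the rescaled Chebyshev polynomials `S_n` of the second kind, extended to `ℤ` by
`S_{-1} = 0`. Modulo `q = x² + t x y + y²` we have `x² ≡ -t x y - y²`, and the recurrence shows
that multiplying `y^n (x S_n(t) + y S_{n-1}(t))` by `-x` gives the same expression for `n + 1`.
Hence `y^n (x S_n(t) + y S_{n-1}(t)) ≡ (-x)^n x`, so `x y^n S_n(t) ≡ ±x^{n+1} - y^{n+1} S_{n-1}(t)`
modulo `q`.
-/

open MvPolynomial Polynomial.Chebyshev

theorem eq_S_of_recurrence {R : Type*} [CommRing R] (P : ℕ → Polynomial R)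
    (hP0 : P 0 = 1) (hP1 : P 1 = Polynomial.X)
    (hPrec : ∀ n : ℕ, 1 ≤ n → P (n + 1) = Polynomial.X * P n - P (n - 1)) :
    ∀ n : ℕ, P n = S R n
  | 0 => by simp [hP0]
  | 1 => by simp [hP1]
  | n + 2 => by
    rw [hPrec (n + 1) (by omega), Nat.add_sub_cancel,
      eq_S_of_recurrence P hP0 hP1 hPrec (n + 1), eq_S_of_recurrence P hP0 hP1 hPrec n]
    push_cast
    exact (S_add_two R n).symm

section

variable {R A : Type*} [CommRing R] [CommRing A] [Algebra R A] (t x y : A)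

theorem neg_pow_mul_sub_pow_mul_aeval_S_mem_span (n : ℕ) :
    (-x) ^ n * x - y ^ n * (x * Polynomial.aeval t (S R n) + y * Polynomial.aeval t (S R (n - 1)))
      ∈ Ideal.span {x ^ 2 + t * x * y + y ^ 2} := by
  induction n with
  | zero => simp
  | succ n ih =>
    have hq : x ^ 2 + t * x * y + y ^ 2 ∈ Ideal.span {x ^ 2 + t * x * y + y ^ 2} :=
      Ideal.subset_span rfl
    have step : (-x) ^ (n + 1) * x - y ^ (n + 1) *
          (x * Polynomial.aeval t (S R ↑(n + 1)) + y * Polynomial.aeval t (S R (↑(n + 1) - 1))) =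
        -x * ((-x) ^ n * x - y ^ n *
          (x * Polynomial.aeval t (S R n) + y * Polynomial.aeval t (S R (n - 1)))) -
        y ^ n * Polynomial.aeval t (S R n) * (x ^ 2 + t * x * y + y ^ 2) := by
      simp only [Nat.cast_succ, add_sub_cancel_right, S_add_one, map_sub, map_mul,
        Polynomial.aeval_X]
      ring
    rw [step]
    exact Ideal.sub_mem _ (Ideal.mul_mem_left _ _ ih) (Ideal.mul_mem_left _ _ hq)

theorem mul_pow_mul_aeval_S_mem_span (n : ℕ) :
    x * y ^ n * Polynomial.aeval t (S R n) ∈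
      Ideal.span {x ^ (n + 1), y ^ (n + 1), x ^ 2 + t * x * y + y ^ 2} := by
  set I := Ideal.span {x ^ (n + 1), y ^ (n + 1), x ^ 2 + t * x * y + y ^ 2}
  have hE : (-x) ^ n * x - y ^ n *
      (x * Polynomial.aeval t (S R n) + y * Polynomial.aeval t (S R (n - 1))) ∈ I :=
    Ideal.span_mono (by simp) (neg_pow_mul_sub_pow_mul_aeval_S_mem_span t x y n)
  have hx : x ^ (n + 1) ∈ I := Ideal.subset_span (by simp)
  have hy : y ^ (n + 1) ∈ I := Ideal.subset_span (by simp)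
  have split : x * y ^ n * Polynomial.aeval t (S R n) =
      -((-x) ^ n * x - y ^ n *
        (x * Polynomial.aeval t (S R n) + y * Polynomial.aeval t (S R (n - 1)))) +
      (-1) ^ n * x ^ (n + 1) - Polynomial.aeval t (S R (n - 1)) * y ^ (n + 1) := by
    ring
  rw [split]
  exact I.sub_mem (I.add_mem (I.neg_mem hE) (I.mul_mem_left _ hx)) (I.mul_mem_left _ hy)

end

/-- With `P_0 = 1`, `P_1 = t`, `P_{n+1} = t P_n - P_{n-1}` in `k[t]`,
for every `n ≥ 1` one has `x y^{n-1} P_{n-1} ∈ (x^n, y^n, x^2 + t x y + y^2)` in `k[t,x,y]`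
(here `t = X 0`, `x = X 1`, `y = X 2`). -/
theorem stmt5 {k : Type*} [Field k] (P : ℕ → Polynomial k)
    (hP0 : P 0 = 1) (hP1 : P 1 = Polynomial.X)
    (hPrec : ∀ n : ℕ, 1 ≤ n → P (n + 1) = Polynomial.X * P n - P (n - 1)) :
    ∀ n : ℕ, 1 ≤ n →
      (X 1 : MvPolynomial (Fin 3) k) * (X 2) ^ (n - 1) *
          Polynomial.aeval (X 0 : MvPolynomial (Fin 3) k) (P (n - 1)) ∈
        Ideal.span {(X 1 : MvPolynomial (Fin 3) k) ^ n, (X 2) ^ n,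
          (X 1) ^ 2 + (X 0) * (X 1) * (X 2) + (X 2) ^ 2} := by
  intro n hn
  obtain ⟨m, rfl⟩ := Nat.exists_eq_add_of_le' hn
  rw [Nat.add_sub_cancel, eq_S_of_recurrence P hP0 hP1 hPrec m]
  exact mul_pow_mul_aeval_S_mem_span _ _ _ m
end

section
/- Let k be a field, r_0, r_1, r_2 ∈ k[t], and P_n as defined by P_0 = 1, P_1 = r_1, P_{n+1} = r_1 P_n − r_0 r_2 P_{n−1}. Then for every n ≥ 1, in k[t,x,y] one has x y^{n−1} P_{n−1} ∈ (x^n, y^n, r_0 x^2 + r_1 x y + r_2 y^2). -/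
open MvPolynomial

/-!
Write `q = r₀ x² + r₁ x y + r₂ y²`. Modulo `q` one has `r₁ x y ≡ -r₀ x² - r₂ y²`, and feeding this
into the recurrence gives, by induction on `m`,
`x y^(m+1) P_(m+1) ≡ (-r₀)^(m+1) x^(m+2) - r₂ P_m y^(m+2)  (mod q)`.
The right-hand side lies in `(x^(m+2), y^(m+2))`.
-/

section Recurrence

variable {R : Type*} [CommRing R] (r₀ r₁ r₂ x y : R) {p : ℕ → R}

theorem quadratic_dvd_mul_pow_mul_sub (h0 : p 0 = 1) (h1 : p 1 = r₁)
    (hrec : ∀ n, p (n + 2) = r₁ * p (n + 1) - r₀ * r₂ * p n) (m : ℕ) :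
    r₀ * x ^ 2 + r₁ * x * y + r₂ * y ^ 2 ∣
      x * y ^ (m + 1) * p (m + 1) - ((-r₀) ^ (m + 1) * x ^ (m + 2) - r₂ * p m * y ^ (m + 2)) := by
  induction m with
  | zero => exact ⟨1, by rw [h0, h1]; ring⟩
  | succ m ih =>
    have step : x * y ^ (m + 2) * p (m + 2)
          - ((-r₀) ^ (m + 2) * x ^ (m + 3) - r₂ * p (m + 1) * y ^ (m + 3)) =
        -r₀ * x * (x * y ^ (m + 1) * p (m + 1)
          - ((-r₀) ^ (m + 1) * x ^ (m + 2) - r₂ * p m * y ^ (m + 2)))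
        + (r₀ * x ^ 2 + r₁ * x * y + r₂ * y ^ 2) * (y ^ (m + 1) * p (m + 1)) := by
      rw [hrec]; ring
    rw [step]
    exact dvd_add (dvd_mul_of_dvd_right ih _) (dvd_mul_right _ _)

theorem mul_pow_mul_mem_span_pow_pow_quadratic (h0 : p 0 = 1) (h1 : p 1 = r₁)
    (hrec : ∀ n, p (n + 2) = r₁ * p (n + 1) - r₀ * r₂ * p n) (m : ℕ) :
    x * y ^ m * p m ∈
      Ideal.span {x ^ (m + 1), y ^ (m + 1), r₀ * x ^ 2 + r₁ * x * y + r₂ * y ^ 2} := by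
  set J := Ideal.span {x ^ (m + 1), y ^ (m + 1), r₀ * x ^ 2 + r₁ * x * y + r₂ * y ^ 2}
  have hx : x ^ (m + 1) ∈ J := Ideal.subset_span (by simp)
  have hy : y ^ (m + 1) ∈ J := Ideal.subset_span (by simp)
  have hq : r₀ * x ^ 2 + r₁ * x * y + r₂ * y ^ 2 ∈ J := Ideal.subset_span (by simp)
  cases m with
  | zero => simpa [h0] using hx
  | succ m =>
    obtain ⟨c, hc⟩ := quadratic_dvd_mul_pow_mul_sub r₀ r₁ r₂ x y h0 h1 hrec m
    rw [← sub_add_cancel (x * y ^ (m + 1) * p (m + 1)), hc]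
    exact J.add_mem (J.mul_mem_right _ hq)
      (J.sub_mem (J.mul_mem_left _ hx) (J.mul_mem_left _ hy))

end Recurrence

/-- For arbitrary `r₀ r₁ r₂ ∈ k[t]` and `P_0 = 1`, `P_1 = r₁`,
`P_{n+1} = r₁ P_n - r₀ r₂ P_{n-1}`, for every `n ≥ 1` one has
`x y^{n-1} P_{n-1} ∈ (x^n, y^n, r₀ x^2 + r₁ x y + r₂ y^2)` in `k[t,x,y]`
(with `t = X 0`, `x = X 1`, `y = X 2`). -/
theorem stmt8 {k : Type*} [Field k] (r₀ r₁ r₂ : Polynomial k) (P : ℕ → Polynomial k)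
    (hP0 : P 0 = 1) (hP1 : P 1 = r₁)
    (hPrec : ∀ n : ℕ, 1 ≤ n → P (n + 1) = r₁ * P n - r₀ * r₂ * P (n - 1)) :
    ∀ n : ℕ, 1 ≤ n →
      (X 1 : MvPolynomial (Fin 3) k) * (X 2) ^ (n - 1) *
          Polynomial.aeval (X 0 : MvPolynomial (Fin 3) k) (P (n - 1)) ∈
        Ideal.span {(X 1 : MvPolynomial (Fin 3) k) ^ n, (X 2) ^ n,
          Polynomial.aeval (X 0 : MvPolynomial (Fin 3) k) r₀ * (X 1) ^ 2
            + Polynomial.aeval (X 0 : MvPolynomial (Fin 3) k) r₁ * (X 1) * (X 2)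
            + Polynomial.aeval (X 0 : MvPolynomial (Fin 3) k) r₂ * (X 2) ^ 2} := by
  intro n hn
  obtain ⟨m, rfl⟩ : ∃ m, n = m + 1 := ⟨n - 1, by omega⟩
  set a := Polynomial.aeval (R := k) (X 0 : MvPolynomial (Fin 3) k)
  have hrec : ∀ n, a (P (n + 2)) = a r₁ * a (P (n + 1)) - a r₀ * a r₂ * a (P n) := fun n => by
    simp [hPrec (n + 1) (Nat.le_add_left 1 n)]
  simpa using mul_pow_mul_mem_span_pow_pow_quadratic (a r₀) (a r₁) (a r₂) (X 1) (X 2)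
    (p := fun n => a (P n)) (by simp [hP0]) (by simp [hP1]) hrec m
end

section
/- Let k be a field, S = k[t,u,v,x,y], r_0, r_1, r_2 ∈ k[t] with 2·deg r_1 > deg r_0 + deg r_2. For n ≥ 0 set I_n = (u^n, v^n, x^n, y^n, r_0 u^2 x^2 + r_1 u x v y + r_2 v^2 y^2) and let L_n be the least common multiple of P_1, …, P_{n−1} (where P_j is the recurrence sequence P_0 = 1, P_1 = r_1, P_{j+1} = r_1 P_j − r_0 r_2 P_{j−1}). Then for all nonnegative integers a, b, c, d with 2a + 2b + c + d = 2n, one has (r_0 r_2)^{a+b} L_n (u x)^a (v y)^b x^c y^d ∈ I_n. -/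
/-!
Put `A = -u x`, `B = v y` and `ρᵢ = rᵢ(t)`, so that the last generator of `I_n` becomes
`ρ₀ A² - ρ₁ A B + ρ₂ B²`. Modulo this relation, induction on `m` with the recurrence gives
`ρ₂^(m+1) B^(m+2) = A^(m+1) (P_(m+1) B - ρ₀ P_m A)`, and symmetrically with `A` and `B` exchanged.
A monomial whose `x`- or `y`-degree reaches `n` lies in `I_n`. Otherwise, if `c > d`, trading the
surplus of `B`'s for `A`'s raises the `x`-degree to `n` (symmetrically if `c < d`). If `c = d`,
then `a + b + c = n`, and the identity used twice shows
`P_(a+b-1) ρ₂^(b-1) A^a B^b ∈ (A^(a+b), B^(a+b))`, whose generators vanish after multiplication by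
`x^c y^c`; the factor `P_(a+b-1)` is supplied by `L`.
-/

open MvPolynomial

theorem pow_mul_pow_eq_zero_of_dvd {M : Type*} [CommMonoidWithZero M] {A x : M} {n k c : ℕ}
    (hxA : x ∣ A) (hx : x ^ n = 0) (hn : n ≤ k + c) : A ^ k * x ^ c = 0 := by
  have hdvd : x ^ (k + c) ∣ A ^ k * x ^ c :=
    pow_add x k c ▸ mul_dvd_mul (pow_dvd_pow_of_dvd hxA k) dvd_rfl
  rwa [pow_eq_zero_of_le hn hx, zero_dvd_iff] at hdvd

section QuadraticRelation

variable {R : Type*} [CommRing R] {ρ₀ ρ₁ ρ₂ A B : R} {p : ℕ → R}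

theorem pow_mul_pow_add_two_eq_pow_mul (hp0 : p 0 = 1) (hp1 : p 1 = ρ₁)
    (hp : ∀ j, p (j + 2) = ρ₁ * p (j + 1) - ρ₀ * ρ₂ * p j)
    (hG : ρ₀ * A ^ 2 - ρ₁ * A * B + ρ₂ * B ^ 2 = 0) (m : ℕ) :
    ρ₂ ^ (m + 1) * B ^ (m + 2) = A ^ (m + 1) * (p (m + 1) * B - ρ₀ * p m * A) := by
  induction m with
  | zero => rw [hp1, hp0]; linear_combination hG
  | succ m ih =>
    rw [hp m]
    linear_combination ρ₂ * B * ih + A ^ (m + 1) * p (m + 1) * hG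

theorem mul_pow_mul_pow_mem_span_pow (hp0 : p 0 = 1) (hp1 : p 1 = ρ₁)
    (hp : ∀ j, p (j + 2) = ρ₁ * p (j + 1) - ρ₀ * ρ₂ * p j)
    (hG : ρ₀ * A ^ 2 - ρ₁ * A * B + ρ₂ * B ^ 2 = 0) (i j : ℕ) :
    p (i + j + 1) * ρ₂ ^ j * A ^ (i + 1) * B ^ (j + 1) ∈
      Ideal.span {A ^ (i + j + 2), B ^ (i + j + 2)} := by
  have key := pow_mul_pow_add_two_eq_pow_mul hp0 hp1 hp hG
  have corner : p (i + j + 1) * A ^ (i + j + 1) * B ∈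
      Ideal.span {A ^ (i + j + 2), B ^ (i + j + 2)} :=
    Ideal.mem_span_pair.mpr ⟨ρ₀ * p (i + j), ρ₂ ^ (i + j + 1), by
      linear_combination key (i + j)⟩
  rcases j with _ | j
  · simpa using corner
  · have hsplit : p (i + (j + 1) + 1) * ρ₂ ^ (j + 1) * A ^ (i + 1) * B ^ (j + 1 + 1) =
        p (j + 1) * (p (i + (j + 1) + 1) * A ^ (i + (j + 1) + 1) * B)
          - ρ₀ * p j * p (i + (j + 1) + 1) * A ^ (i + (j + 1) + 2) := by
      linear_combination p (i + j + 2) * A ^ (i + 1) * key j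
    rw [hsplit]
    exact Ideal.sub_mem _ (Ideal.mul_mem_left _ _ corner)
      (Ideal.mul_mem_left _ _ (Ideal.subset_span (by simp)))

theorem mul_monomial_eq_zero (hp0 : p 0 = 1) (hp1 : p 1 = ρ₁)
    (hp : ∀ j, p (j + 2) = ρ₁ * p (j + 1) - ρ₀ * ρ₂ * p j)
    (hG : ρ₀ * A ^ 2 - ρ₁ * A * B + ρ₂ * B ^ 2 = 0) {x y ℓ : R} {n : ℕ}
    (hxA : x ∣ A) (hyB : y ∣ B) (hx : x ^ n = 0) (hy : y ^ n = 0)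
    (hℓ : ∀ j ∈ Finset.Icc 1 (n - 1), p j ∣ ℓ) {a b c d : ℕ}
    (habcd : 2 * a + 2 * b + c + d = 2 * n) :
    (ρ₀ * ρ₂) ^ (a + b) * ℓ * A ^ a * B ^ b * x ^ c * y ^ d = 0 := by
  wlog hdc : d ≤ c generalizing ρ₀ ρ₂ A B x y a b c d
  · have hp' : ∀ j, p (j + 2) = ρ₁ * p (j + 1) - ρ₂ * ρ₀ * p j := fun j => by
      rw [hp, mul_comm ρ₂]
    linear_combination this (a := b) (b := a) (c := d) (d := c) hp' (by linear_combination hG)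
      hyB hxA hy hx (by omega) (by omega)
  by_cases hac : n ≤ a + c
  · linear_combination (ρ₀ * ρ₂) ^ (a + b) * ℓ * B ^ b * y ^ d *
      pow_mul_pow_eq_zero_of_dvd hxA hx hac
  by_cases hbd : n ≤ b + d
  · linear_combination (ρ₀ * ρ₂) ^ (a + b) * ℓ * A ^ a * x ^ c *
      pow_mul_pow_eq_zero_of_dvd hyB hy hbd
  have key := pow_mul_pow_add_two_eq_pow_mul hp0 hp1 hp hG
  rcases hdc.lt_or_eq with hdc | rfl
  · obtain ⟨m, b', rfl, hn⟩ : ∃ m b', b = b' + m + 2 ∧ n = a + m + 1 + c :=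
      ⟨n - a - c - 1, b - (n - a - c - 1) - 2, by omega, by omega⟩
    have hzero := pow_mul_pow_eq_zero_of_dvd hxA hx hn.le
    set C := ρ₀ ^ (a + b' + m + 2) * ρ₂ ^ (a + b' + 1) * ℓ * B ^ b' * y ^ d
    linear_combination C * A ^ a * x ^ c * key m + C * (p (m + 1) * B - ρ₀ * p m * A) * hzero
  · obtain ⟨i, j, rfl, rfl⟩ : ∃ i j, a = i + 1 ∧ b = j + 1 := ⟨a - 1, b - 1, by omega, by omega⟩
    obtain ⟨ℓ', rfl⟩ := hℓ (i + j + 1) (Finset.mem_Icc.mpr ⟨by omega, by omega⟩)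
    obtain ⟨α, β, hαβ⟩ :=
      Ideal.mem_span_pair.mp (mul_pow_mul_pow_mem_span_pow hp0 hp1 hp hG i j)
    have hA := pow_mul_pow_eq_zero_of_dvd (k := i + j + 2) (c := d) hxA hx (by omega)
    have hB := pow_mul_pow_eq_zero_of_dvd (k := i + j + 2) (c := d) hyB hy (by omega)
    set C := ρ₀ ^ (i + j + 2) * ρ₂ ^ (i + 2) * ℓ'
    linear_combination C * y ^ d * α * hA + C * x ^ d * β * hB - C * x ^ d * y ^ d * hαβ

end QuadraticRelation

theorem mul_monomial_mem_of_mem {S : Type*} [CommRing S] {I : Ideal S}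
    {ρ₀ ρ₁ ρ₂ ℓ u v x y : S} {p : ℕ → S} (hp0 : p 0 = 1) (hp1 : p 1 = ρ₁)
    (hp : ∀ j, p (j + 2) = ρ₁ * p (j + 1) - ρ₀ * ρ₂ * p j)
    (hF : ρ₀ * u ^ 2 * x ^ 2 + ρ₁ * u * x * v * y + ρ₂ * v ^ 2 * y ^ 2 ∈ I) {n : ℕ}
    (hx : x ^ n ∈ I) (hy : y ^ n ∈ I) (hℓ : ∀ j ∈ Finset.Icc 1 (n - 1), p j ∣ ℓ) {a b c d : ℕ}
    (habcd : 2 * a + 2 * b + c + d = 2 * n) :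
    (ρ₀ * ρ₂) ^ (a + b) * ℓ * (u * x) ^ a * (v * y) ^ b * x ^ c * y ^ d ∈ I := by
  rw [← Ideal.Quotient.eq_zero_iff_mem] at hF hx hy ⊢
  set π := Ideal.Quotient.mk I
  simp only [map_add, map_mul, map_pow] at hF hx hy ⊢
  have h := mul_monomial_eq_zero (ρ₀ := π ρ₀) (ρ₁ := π ρ₁) (ρ₂ := π ρ₂) (p := π ∘ p)
    (A := -(π u * π x)) (B := π v * π y) (x := π x) (y := π y) (ℓ := π ℓ)
    (by simp [hp0]) (by simp [hp1]) (fun j => by simp [hp]) (by linear_combination hF)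
    (dvd_neg.mpr (dvd_mul_left _ _)) (dvd_mul_left _ _) hx hy
    (fun j hj => map_dvd π (hℓ j hj)) habcd
  rw [neg_pow, mul_comm ((-1) ^ a)] at h
  refine ((isUnit_neg_one (α := S ⧸ I)).pow a).mul_left_eq_zero.mp ?_
  linear_combination h

theorem stmt10_general {k : Type*} [Field k] (r₀ r₁ r₂ : Polynomial k)
    (P : ℕ → Polynomial k) (hP0 : P 0 = 1) (hP1 : P 1 = r₁)
    (hPrec : ∀ j : ℕ, 1 ≤ j → P (j + 1) = r₁ * P j - r₀ * r₂ * P (j - 1))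
    (n : ℕ) (L : Polynomial k)
    (hLdvd : ∀ j ∈ Finset.Icc 1 (n - 1), P j ∣ L) :
    ∀ a b c d : ℕ, 2 * a + 2 * b + c + d = 2 * n →
      Polynomial.aeval (X 0 : MvPolynomial (Fin 5) k) ((r₀ * r₂) ^ (a + b) * L) *
          ((X 1) * (X 3)) ^ a * ((X 2) * (X 4)) ^ b * (X 3) ^ c * (X 4) ^ d ∈
        Ideal.span {(X 1 : MvPolynomial (Fin 5) k) ^ n, (X 2) ^ n, (X 3) ^ n, (X 4) ^ n,
          Polynomial.aeval (X 0 : MvPolynomial (Fin 5) k) r₀ * (X 1) ^ 2 * (X 3) ^ 2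
            + Polynomial.aeval (X 0 : MvPolynomial (Fin 5) k) r₁ * (X 1) * (X 3) * (X 2) * (X 4)
            + Polynomial.aeval (X 0 : MvPolynomial (Fin 5) k) r₂ * (X 2) ^ 2 * (X 4) ^ 2} := by
  intro a b c d habcd
  simp only [map_mul, map_pow]
  refine mul_monomial_mem_of_mem (ρ₁ := Polynomial.aeval (X 0 : MvPolynomial (Fin 5) k) r₁)
    (p := fun j => Polynomial.aeval (X 0 : MvPolynomial (Fin 5) k) (P j))
    (by simp [hP0]) (by simp [hP1]) (fun j => ?_) (Ideal.subset_span (by simp))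
    (Ideal.subset_span (by simp)) (Ideal.subset_span (by simp))
    (fun j hj => map_dvd _ (hLdvd j hj)) habcd
  simp [hPrec (j + 1) (by omega)]

/-- In `S = k[t,u,v,x,y]` (with `t = X 0`, `u = X 1`, `v = X 2`, `x = X 3`,
`y = X 4`), assuming `2 deg r₁ > deg r₀ + deg r₂`, with `P` the recurrence sequence and
`L` a least common multiple of `P_1, …, P_{n-1}`, for all `a b c d ≥ 0` with
`2a + 2b + c + d = 2n` one has `(r₀ r₂)^{a+b} L (u x)^a (v y)^b x^c y^d ∈ I_n`, where
`I_n = (u^n, v^n, x^n, y^n, r₀ u²x² + r₁ u x v y + r₂ v²y²)`. -/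
theorem stmt10 {k : Type*} [Field k] (r₀ r₁ r₂ : Polynomial k)
    (hdeg : r₀.degree + r₂.degree < r₁.degree + r₁.degree)
    (P : ℕ → Polynomial k) (hP0 : P 0 = 1) (hP1 : P 1 = r₁)
    (hPrec : ∀ j : ℕ, 1 ≤ j → P (j + 1) = r₁ * P j - r₀ * r₂ * P (j - 1))
    (n : ℕ) (L : Polynomial k)
    (hLdvd : ∀ j ∈ Finset.Icc 1 (n - 1), P j ∣ L)
    (hLmin : ∀ M : Polynomial k, (∀ j ∈ Finset.Icc 1 (n - 1), P j ∣ M) → L ∣ M) :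
    ∀ a b c d : ℕ, 2 * a + 2 * b + c + d = 2 * n →
      Polynomial.aeval (X 0 : MvPolynomial (Fin 5) k) ((r₀ * r₂) ^ (a + b) * L) *
          ((X 1) * (X 3)) ^ a * ((X 2) * (X 4)) ^ b * (X 3) ^ c * (X 4) ^ d ∈
        Ideal.span {(X 1 : MvPolynomial (Fin 5) k) ^ n, (X 2) ^ n, (X 3) ^ n, (X 4) ^ n,
          Polynomial.aeval (X 0 : MvPolynomial (Fin 5) k) r₀ * (X 1) ^ 2 * (X 3) ^ 2
            + Polynomial.aeval (X 0 : MvPolynomial (Fin 5) k) r₁ * (X 1) * (X 3) * (X 2) * (X 4)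
            + Polynomial.aeval (X 0 : MvPolynomial (Fin 5) k) r₂ * (X 2) ^ 2 * (X 4) ^ 2} :=
  stmt10_general r₀ r₁ r₂ P hP0 hP1 hPrec n L hLdvd
end

section
/- With the notation of the previous statement (S = k[t,u,v,x,y], I_n, L_n, and 2 deg r_1 > deg r_0 + deg r_2), one has the containment I_n + (u,v,x,y)^{2n} ⊆ I_n : (r_0^n r_2^n L_n), i.e., r_0^n r_2^n L_n · (u,v,x,y)^{2n} ⊆ I_n. -/
/-!
Put `a = ux`, `b = vy` and `G = r₀a² + r₁ab + r₂b²`. Multiplying `G ≡ 0` repeatedly by `r₀a` gives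
`r₀ʲ a^{j+1} ≡ (-1)ʲ P_j a bʲ (mod b^{j+1}, G)`: powers of `a` can be traded for powers of `b`
at the cost of powers of `r₀`, and symmetrically with `r₂`. Write a monomial of degree `2n` as
`aˢ bᵗ w₁ᵉ w₂ᶠ` with `w₁ ∈ {u, x}`, `w₂ ∈ {v, y}`. If `e < f`, parity forces `f ≥ e + 2`, and
trading `a` for `b` pushes the exponent of `w₂` up to `n`; the case `e > f` is symmetric. If
`e = f`, then `s + t + e = n` and the trade leaves a multiple of `a bᵐ w₁ᵉ w₂ᵉ` with
`m = s + t - 1`. Multiplied by `P_m`, which divides `L_n`, the same congruence at `m` rewrites it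
into multiples of `a^{m+1} w₁ᵉ` and `b^{m+1} w₂ᵉ`, and both vanish.
-/

open MvPolynomial
open scoped Pointwise

/-- `lucasSeq a q j` is the Lucas sequence `U_{j+1}(a, q)`; the paper's `P_j` is
`lucasSeq r₁ (r₀ * r₂) j`. -/
def lucasSeq {R : Type*} [CommRing R] (a q : R) : ℕ → R
  | 0 => 1
  | 1 => a
  | j + 2 => a * lucasSeq a q (j + 1) - q * lucasSeq a q j

section

variable {R : Type*} [CommRing R]

theorem eq_lucasSeq {a q : R} {p : ℕ → R} (h0 : p 0 = 1) (h1 : p 1 = a)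
    (hrec : ∀ j : ℕ, 1 ≤ j → p (j + 1) = a * p j - q * p (j - 1)) (j : ℕ) :
    p j = lucasSeq a q j := by
  induction j using Nat.twoStepInduction with
  | zero => exact h0
  | one => exact h1
  | more j ih₀ ih₁ => rw [hrec (j + 1) (by omega), Nat.add_sub_cancel, ih₀, ih₁, lucasSeq]

theorem map_lucasSeq {S F : Type*} [CommRing S] [FunLike F R S] [RingHomClass F R S] (f : F)
    (a q : R) (j : ℕ) :
    f (lucasSeq a q j) = lucasSeq (f a) (f q) j := by
  induction j using Nat.twoStepInduction with
  | zero => simp [lucasSeq]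
  | one => simp [lucasSeq]
  | more j ih₀ ih₁ => simp [lucasSeq, ih₀, ih₁]

theorem pow_mul_pow_eq_zero_of_dvd_s11 {w b : R} {n N e : ℕ} (hb : w ∣ b) (hw : w ^ n = 0)
    (h : n ≤ N + e) : b ^ N * w ^ e = 0 := by
  obtain ⟨c, rfl⟩ := hb
  obtain ⟨d, hd⟩ := Nat.exists_eq_add_of_le h
  calc (w * c) ^ N * w ^ e = w ^ (N + e) * c ^ N := by ring
    _ = 0 := by rw [hd, pow_add, hw, zero_mul, zero_mul]

variable {ρ₀ ρ₁ ρ₂ a b : R}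

theorem rho_pow_mul_pow_eq (hG : ρ₀ * a ^ 2 + ρ₁ * a * b + ρ₂ * b ^ 2 = 0) (j : ℕ) :
    ρ₀ ^ (j + 1) * a ^ (j + 2) = (-1) ^ (j + 1) * b ^ (j + 1) *
      (lucasSeq ρ₁ (ρ₀ * ρ₂) (j + 1) * a + ρ₂ * lucasSeq ρ₁ (ρ₀ * ρ₂) j * b) := by
  induction j with
  | zero =>
    simp only [lucasSeq]
    linear_combination hG
  | succ j ih =>
    rw [lucasSeq]
    linear_combination ρ₀ * a * ih
      + (-1) ^ (j + 1) * b ^ (j + 1) * lucasSeq ρ₁ (ρ₀ * ρ₂) (j + 1) * hG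

theorem exists_rho_pow_mul_pow_eq (hG : ρ₀ * a ^ 2 + ρ₁ * a * b + ρ₂ * b ^ 2 = 0) (j : ℕ) :
    ∃ c, ρ₀ ^ j * a ^ (j + 1) =
      (-1) ^ j * lucasSeq ρ₁ (ρ₀ * ρ₂) j * a * b ^ j + c * b ^ (j + 1) := by
  cases j with
  | zero => exact ⟨0, by simp [lucasSeq]⟩
  | succ j =>
    exact ⟨(-1) ^ (j + 1) * ρ₂ * lucasSeq ρ₁ (ρ₀ * ρ₂) j,
      by linear_combination rho_pow_mul_pow_eq hG j⟩

variable {n : ℕ} {w₁ w₂ : R}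

theorem rho_pow_mul_eq_zero_of_lt (hG : ρ₀ * a ^ 2 + ρ₁ * a * b + ρ₂ * b ^ 2 = 0)
    (hb : w₂ ∣ b) (hw₂ : w₂ ^ n = 0) {s t e f : ℕ} (hsum : 2 * s + 2 * t + e + f = 2 * n)
    (hef : e < f) : ρ₀ ^ n * (a ^ s * b ^ t * w₁ ^ e * w₂ ^ f) = 0 := by
  cases s with
  | zero =>
    linear_combination ρ₀ ^ n * w₁ ^ e *
      pow_mul_pow_eq_zero_of_dvd_s11 hb hw₂ (N := t) (e := f) (by omega)
  | succ j =>
    obtain ⟨c, hc⟩ := exists_rho_pow_mul_pow_eq hG j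
    obtain ⟨κ, rfl⟩ : ∃ κ, n = j + κ := ⟨n - j, by omega⟩
    have hkill := pow_mul_pow_eq_zero_of_dvd_s11 hb hw₂ (N := j + t) (e := f) (by omega)
    linear_combination ρ₀ ^ κ * b ^ t * w₁ ^ e * w₂ ^ f * hc
      + ρ₀ ^ κ * ((-1) ^ j * lucasSeq ρ₁ (ρ₀ * ρ₂) j * a + c * b) * w₁ ^ e * hkill

theorem lucasSeq_mul_eq_zero (hG : ρ₀ * a ^ 2 + ρ₁ * a * b + ρ₂ * b ^ 2 = 0)
    (ha : w₁ ∣ a) (hb : w₂ ∣ b) (hw₁ : w₁ ^ n = 0) (hw₂ : w₂ ^ n = 0) {m e : ℕ}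
    (hm : n ≤ m + 1 + e) : lucasSeq ρ₁ (ρ₀ * ρ₂) m * (a * b ^ m * w₁ ^ e * w₂ ^ e) = 0 := by
  obtain ⟨c, hc⟩ := exists_rho_pow_mul_pow_eq hG m
  have ha' := pow_mul_pow_eq_zero_of_dvd_s11 ha hw₁ hm
  have hb' := pow_mul_pow_eq_zero_of_dvd_s11 hb hw₂ hm
  have hsign : ((-1 : R) ^ m) ^ 2 = 1 := by rw [← pow_mul, mul_comm, pow_mul]; norm_num
  linear_combination -(-1) ^ m * w₁ ^ e * w₂ ^ e * hc + (-1) ^ m * ρ₀ ^ m * w₂ ^ e * ha'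
    - (-1) ^ m * c * w₁ ^ e * hb' - lucasSeq ρ₁ (ρ₀ * ρ₂) m * a * b ^ m * w₁ ^ e * w₂ ^ e * hsign

theorem rho_pow_mul_lucasSeq_mul_eq_zero (hG : ρ₀ * a ^ 2 + ρ₁ * a * b + ρ₂ * b ^ 2 = 0)
    (ha : w₁ ∣ a) (hb : w₂ ∣ b) (hw₁ : w₁ ^ n = 0) (hw₂ : w₂ ^ n = 0) {j k e : ℕ}
    (hn : j + k + 2 + e = n) :
    ρ₀ ^ j * lucasSeq ρ₁ (ρ₀ * ρ₂) (j + k + 1) * (a ^ (j + 1) * b ^ (k + 1) * w₁ ^ e * w₂ ^ e)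
      = 0 := by
  obtain ⟨c, hc⟩ := exists_rho_pow_mul_pow_eq hG j
  have hm := lucasSeq_mul_eq_zero hG ha hb hw₁ hw₂ (m := j + k + 1) (e := e) (by omega)
  have hb' := pow_mul_pow_eq_zero_of_dvd_s11 hb hw₂ (N := j + k + 2) (e := e) (by omega)
  linear_combination lucasSeq ρ₁ (ρ₀ * ρ₂) (j + k + 1) * b ^ (k + 1) * w₁ ^ e * w₂ ^ e * hc
    + (-1) ^ j * lucasSeq ρ₁ (ρ₀ * ρ₂) j * hm
    + c * lucasSeq ρ₁ (ρ₀ * ρ₂) (j + k + 1) * w₁ ^ e * hb'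

theorem rho_pow_mul_eq_zero (hG : ρ₀ * a ^ 2 + ρ₁ * a * b + ρ₂ * b ^ 2 = 0)
    (ha : w₁ ∣ a) (hb : w₂ ∣ b) (hw₁ : w₁ ^ n = 0) (hw₂ : w₂ ^ n = 0) {Λ : R}
    (hΛ : ∀ j ∈ Finset.Icc 1 (n - 1), lucasSeq ρ₁ (ρ₀ * ρ₂) j ∣ Λ) {s t e f : ℕ}
    (hsum : 2 * s + 2 * t + e + f = 2 * n) :
    ρ₀ ^ n * ρ₂ ^ n * Λ * (a ^ s * b ^ t * w₁ ^ e * w₂ ^ f) = 0 := by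
  rcases lt_trichotomy e f with hef | rfl | hfe
  · linear_combination ρ₂ ^ n * Λ * rho_pow_mul_eq_zero_of_lt (w₁ := w₁) hG hb hw₂ hsum hef
  · rcases s with _ | j
    · linear_combination ρ₀ ^ n * ρ₂ ^ n * Λ * w₁ ^ e *
        pow_mul_pow_eq_zero_of_dvd_s11 hb hw₂ (N := t) (e := e) (by omega)
    rcases t with _ | k
    · linear_combination ρ₀ ^ n * ρ₂ ^ n * Λ * w₂ ^ e *
        pow_mul_pow_eq_zero_of_dvd_s11 ha hw₁ (N := j + 1) (e := e) (by omega)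
    obtain ⟨Λ', rfl⟩ := hΛ (j + k + 1) (Finset.mem_Icc.mpr ⟨by omega, by omega⟩)
    obtain ⟨κ, rfl⟩ : ∃ κ, n = j + κ := ⟨n - j, by omega⟩
    linear_combination ρ₀ ^ κ * ρ₂ ^ (j + κ) * Λ' *
      rho_pow_mul_lucasSeq_mul_eq_zero hG ha hb hw₁ hw₂ (by omega : j + k + 2 + e = j + κ)
  · have hG' : ρ₂ * b ^ 2 + ρ₁ * b * a + ρ₀ * a ^ 2 = 0 := by linear_combination hG
    linear_combination ρ₀ ^ n * Λ *
      rho_pow_mul_eq_zero_of_lt (w₁ := w₂) hG' ha hw₁ (s := t) (t := s) (by omega) hfe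

end

theorem exists_pow_mul_pow_eq {M : Type*} [CommMonoid M] (u x : M) (i k : ℕ) :
    ∃ w e, (w = u ∨ w = x) ∧ i + k = 2 * min i k + e ∧
      u ^ i * x ^ k = (u * x) ^ min i k * w ^ e := by
  rcases le_total k i with h | h
  · obtain ⟨e, rfl⟩ := Nat.exists_eq_add_of_le h
    refine ⟨u, e, Or.inl rfl, by omega, ?_⟩
    rw [min_eq_right h, pow_add, mul_pow]
    ac_rfl
  · obtain ⟨e, rfl⟩ := Nat.exists_eq_add_of_le h
    refine ⟨x, e, Or.inr rfl, by omega, ?_⟩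
    rw [min_eq_left h, pow_add, mul_pow]
    ac_rfl

theorem exists_eq_monomial_of_mem_pow {M : Type*} [CommMonoid M] {a b c d g : M} {m : ℕ}
    (hg : g ∈ ({a, b, c, d} : Set M) ^ m) :
    ∃ i j k l, i + j + k + l = m ∧ g = a ^ i * b ^ j * c ^ k * d ^ l := by
  induction m generalizing g with
  | zero => exact ⟨0, 0, 0, 0, rfl, by simpa using hg⟩
  | succ m ih =>
    rw [pow_succ] at hg
    obtain ⟨g', hg', y, hy, rfl⟩ := Set.mem_mul.mp hg
    obtain ⟨i, j, k, l, hs, rfl⟩ := ih hg'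
    rcases hy with rfl | rfl | rfl | rfl
    · exact ⟨i + 1, j, k, l, by omega, by rw [pow_succ]; ac_rfl⟩
    · exact ⟨i, j + 1, k, l, by omega, by rw [pow_succ]; ac_rfl⟩
    · exact ⟨i, j, k + 1, l, by omega, by rw [pow_succ]; ac_rfl⟩
    · exact ⟨i, j, k, l + 1, by omega, by rw [pow_succ]; ac_rfl⟩

theorem mul_eq_zero_of_mem_span_pow {R : Type*} [CommRing R] {c a b d e g : R} {m : ℕ}
    (h : ∀ i j k l, i + j + k + l = m → c * (a ^ i * b ^ j * d ^ k * e ^ l) = 0)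
    (hg : g ∈ Ideal.span {a, b, d, e} ^ m) : c * g = 0 := by
  rw [Ideal.span, Submodule.span_pow] at hg
  induction hg using Submodule.span_induction with
  | mem g hg =>
    obtain ⟨i, j, k, l, hs, rfl⟩ := exists_eq_monomial_of_mem_pow hg
    exact h i j k l hs
  | zero => exact mul_zero c
  | add g g' _ _ ih ih' => rw [mul_add, ih, ih', add_zero]
  | smul r g _ ih => rw [smul_eq_mul, mul_left_comm, ih, mul_zero]

theorem rho_pow_mul_monomial_eq_zero {R : Type*} [CommRing R] {ρ₀ ρ₁ ρ₂ Λ u v x y : R} {n : ℕ}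
    (hu : u ^ n = 0) (hv : v ^ n = 0) (hx : x ^ n = 0) (hy : y ^ n = 0)
    (hG : ρ₀ * u ^ 2 * x ^ 2 + ρ₁ * u * x * v * y + ρ₂ * v ^ 2 * y ^ 2 = 0)
    (hΛ : ∀ j ∈ Finset.Icc 1 (n - 1), lucasSeq ρ₁ (ρ₀ * ρ₂) j ∣ Λ) {i j k l : ℕ}
    (hsum : i + j + k + l = 2 * n) :
    ρ₀ ^ n * ρ₂ ^ n * Λ * (u ^ i * v ^ j * x ^ k * y ^ l) = 0 := by
  obtain ⟨w₁, e, hw₁, he, hux⟩ := exists_pow_mul_pow_eq u x i k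
  obtain ⟨w₂, f, hw₂, hf, hvy⟩ := exists_pow_mul_pow_eq v y j l
  have ha : w₁ ∣ u * x := by rcases hw₁ with rfl | rfl <;> simp
  have hb : w₂ ∣ v * y := by rcases hw₂ with rfl | rfl <;> simp
  have hw₁n : w₁ ^ n = 0 := by rcases hw₁ with rfl | rfl <;> assumption
  have hw₂n : w₂ ^ n = 0 := by rcases hw₂ with rfl | rfl <;> assumption
  have hG' : ρ₀ * (u * x) ^ 2 + ρ₁ * (u * x) * (v * y) + ρ₂ * (v * y) ^ 2 = 0 := by
    linear_combination hG
  calc ρ₀ ^ n * ρ₂ ^ n * Λ * (u ^ i * v ^ j * x ^ k * y ^ l)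
      = ρ₀ ^ n * ρ₂ ^ n * Λ * ((u ^ i * x ^ k) * (v ^ j * y ^ l)) := by ring
    _ = 0 := by
      rw [hux, hvy]
      linear_combination rho_pow_mul_eq_zero hG' ha hb hw₁n hw₂n hΛ
        (s := min i k) (t := min j l) (e := e) (f := f) (by omega)

theorem mul_mem_of_mem_span_pow {T : Type*} [CommRing T] {I : Ideal T}
    {ρ₀ ρ₁ ρ₂ Λ u v x y : T} {n : ℕ}
    (hu : u ^ n ∈ I) (hv : v ^ n ∈ I) (hx : x ^ n ∈ I) (hy : y ^ n ∈ I)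
    (hG : ρ₀ * u ^ 2 * x ^ 2 + ρ₁ * u * x * v * y + ρ₂ * v ^ 2 * y ^ 2 ∈ I)
    (hΛ : ∀ j ∈ Finset.Icc 1 (n - 1), lucasSeq ρ₁ (ρ₀ * ρ₂) j ∣ Λ) :
    ∀ f ∈ Ideal.span {u, v, x, y} ^ (2 * n), ρ₀ ^ n * ρ₂ ^ n * Λ * f ∈ I := by
  intro f hf
  let π := Ideal.Quotient.mk I
  have hf' : π f ∈ Ideal.span {π u, π v, π x, π y} ^ (2 * n) := by
    simpa [Ideal.map_pow, Ideal.map_span, Set.image_insert_eq] using Ideal.mem_map_of_mem π hf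
  have hΛ' : ∀ j ∈ Finset.Icc 1 (n - 1), lucasSeq (π ρ₁) (π ρ₀ * π ρ₂) j ∣ π Λ := fun j hj => by
    rw [← map_mul, ← map_lucasSeq]
    exact map_dvd π (hΛ j hj)
  simp only [← Ideal.Quotient.eq_zero_iff_mem, map_add, map_mul, map_pow] at hu hv hx hy hG ⊢
  exact mul_eq_zero_of_mem_span_pow (fun i j k l hs =>
    rho_pow_mul_monomial_eq_zero hu hv hx hy hG hΛ' hs) hf'

theorem stmt11_general {k : Type*} [Field k] (r₀ r₁ r₂ : Polynomial k)
    (P : ℕ → Polynomial k) (hP0 : P 0 = 1) (hP1 : P 1 = r₁)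
    (hPrec : ∀ j : ℕ, 1 ≤ j → P (j + 1) = r₁ * P j - r₀ * r₂ * P (j - 1))
    (n : ℕ) (L : Polynomial k)
    (hLdvd : ∀ j ∈ Finset.Icc 1 (n - 1), P j ∣ L) :
    ∀ f ∈ (Ideal.span {(X 1 : MvPolynomial (Fin 5) k), X 2, X 3, X 4}) ^ (2 * n),
      Polynomial.aeval (X 0 : MvPolynomial (Fin 5) k) (r₀ ^ n * r₂ ^ n * L) * f ∈
        Ideal.span {(X 1 : MvPolynomial (Fin 5) k) ^ n, (X 2) ^ n, (X 3) ^ n, (X 4) ^ n,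
          Polynomial.aeval (X 0 : MvPolynomial (Fin 5) k) r₀ * (X 1) ^ 2 * (X 3) ^ 2
            + Polynomial.aeval (X 0 : MvPolynomial (Fin 5) k) r₁ * (X 1) * (X 3) * (X 2) * (X 4)
            + Polynomial.aeval (X 0 : MvPolynomial (Fin 5) k) r₂ * (X 2) ^ 2 * (X 4) ^ 2} := by
  simp only [map_mul, map_pow]
  refine mul_mem_of_mem_span_pow (ρ₁ := Polynomial.aeval (X 0) r₁)
    (Ideal.subset_span (by simp)) (Ideal.subset_span (by simp)) (Ideal.subset_span (by simp))
    (Ideal.subset_span (by simp)) (Ideal.subset_span (by simp)) fun j hj => ?_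
  rw [← map_mul, ← map_lucasSeq, ← eq_lucasSeq hP0 hP1 hPrec]
  exact map_dvd _ (hLdvd j hj)

/-- With the notation of Statement 10 (`S = k[t,u,v,x,y]`, `t = X 0`, `u = X 1`,
`v = X 2`, `x = X 3`, `y = X 4`, `2 deg r₁ > deg r₀ + deg r₂`, `L = lcm(P_1, …, P_{n-1})`),
one has `r₀^n r₂^n L · (u,v,x,y)^{2n} ⊆ I_n`. -/
theorem stmt11 {k : Type*} [Field k] (r₀ r₁ r₂ : Polynomial k)
    (hdeg : r₀.degree + r₂.degree < r₁.degree + r₁.degree)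
    (P : ℕ → Polynomial k) (hP0 : P 0 = 1) (hP1 : P 1 = r₁)
    (hPrec : ∀ j : ℕ, 1 ≤ j → P (j + 1) = r₁ * P j - r₀ * r₂ * P (j - 1))
    (n : ℕ) (L : Polynomial k)
    (hLdvd : ∀ j ∈ Finset.Icc 1 (n - 1), P j ∣ L)
    (hLmin : ∀ M : Polynomial k, (∀ j ∈ Finset.Icc 1 (n - 1), P j ∣ M) → L ∣ M) :
    ∀ f ∈ (Ideal.span {(X 1 : MvPolynomial (Fin 5) k), X 2, X 3, X 4}) ^ (2 * n),
      Polynomial.aeval (X 0 : MvPolynomial (Fin 5) k) (r₀ ^ n * r₂ ^ n * L) * f ∈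
        Ideal.span {(X 1 : MvPolynomial (Fin 5) k) ^ n, (X 2) ^ n, (X 3) ^ n, (X 4) ^ n,
          Polynomial.aeval (X 0 : MvPolynomial (Fin 5) k) r₀ * (X 1) ^ 2 * (X 3) ^ 2
            + Polynomial.aeval (X 0 : MvPolynomial (Fin 5) k) r₁ * (X 1) * (X 3) * (X 2) * (X 4)
            + Polynomial.aeval (X 0 : MvPolynomial (Fin 5) k) r₂ * (X 2) ^ 2 * (X 4) ^ 2} :=
  stmt11_general r₀ r₁ r₂ P hP0 hP1 hPrec n L hLdvd
end

section
/- Let k be a field of characteristic p > 0 and let P_n ∈ k[t] be defined by P_0 = 1, P_1 = t, P_{n+1} = t P_n − P_{n−1}. Then the set of irreducible factors (up to units) of the polynomials {P_{p^e − 2} : e ∈ ℕ, p^e ≥ 2} is infinite. -/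
/-!
The `P_n` are the Chebyshev polynomials `S_n`, which satisfy
`(a - a⁻¹) S_n(a + a⁻¹) = a^(n+1) - a^(-(n+1))`. Hence for `q = p^e` every `(q-1)`-st root of
unity `a ≠ ±1` in an algebraic closure of `k` makes `a + a⁻¹` a root of `P_(q-2)`. Since `q - 1`
is prime to `p` there are `q - 1` such roots of unity, and `a ↦ a + a⁻¹` is at most two-to-one,
so finitely many irreducible factors could not account for all of them as `e` grows.
-/

open Polynomial

namespace Polynomial.Chebyshev

theorem eq_S_of_rec {R : Type*} [CommRing R] {P : ℕ → R[X]} (hP0 : P 0 = 1) (hP1 : P 1 = X)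
    (hPrec : ∀ n : ℕ, 1 ≤ n → P (n + 1) = X * P n - P (n - 1)) (n : ℕ) : P n = S R n := by
  induction n using Nat.twoStepInduction with
  | zero => simp [hP0]
  | one => simp [hP1]
  | more n ih₀ ih₁ =>
    rw [hPrec (n + 1) (by omega), Nat.add_sub_cancel, ih₀, ih₁]
    exact_mod_cast (S_add_two R n).symm

theorem sub_mul_S_eval_add {R : Type*} [CommRing R] {x y : R} (hxy : x * y = 1) (n : ℕ) :
    (x - y) * (S R n).eval (x + y) = x ^ (n + 1) - y ^ (n + 1) := by
  induction n using Nat.twoStepInduction with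
  | zero => simp
  | one =>
    simp only [Nat.cast_one, S_one, eval_X, Nat.reduceAdd]
    ring
  | more n ih₀ ih₁ =>
    have h := S_add_two R n
    push_cast at ih₁ h ⊢
    rw [h, eval_sub, eval_mul, eval_X]
    linear_combination (x + y) * ih₁ - ih₀ + (x ^ (n + 1) - y ^ (n + 1)) * hxy

theorem S_eval_add_inv_eq_zero {K : Type*} [Field K] {a : K} {n : ℕ} (ha : a ^ (n + 1) = 1)
    (ha2 : a ^ 2 ≠ 1) : (S K n).eval (a + a⁻¹) = 0 := by
  have ha0 : a ≠ 0 := by rintro rfl; simp at ha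
  have hsub : a - a⁻¹ ≠ 0 := by
    intro h
    apply ha2
    field_simp at h
    linear_combination h
  have := sub_mul_S_eval_add (mul_inv_cancel₀ ha0) n
  rw [inv_pow, ha, inv_one, sub_self] at this
  exact (mul_eq_zero.mp this).resolve_left hsub

theorem minpoly_add_inv_dvd_S {k K : Type*} [Field k] [Field K] [Algebra k K] {a : K} {n : ℕ}
    (ha : a ^ (n + 1) = 1) (ha2 : a ^ 2 ≠ 1) : minpoly k (a + a⁻¹) ∣ S k n :=
  minpoly.dvd k _ (by rw [aeval_S, S_eval_add_inv_eq_zero ha ha2])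

end Polynomial.Chebyshev

theorem Set.Finite.preimage_add_inv {K : Type*} [Field K] {s : Set K} (hs : s.Finite) :
    ((fun a ↦ a + a⁻¹) ⁻¹' s).Finite := by
  refine hs.preimage' fun v _ ↦ ?_
  have hq : (X ^ 2 - C v * X + 1 : K[X]) ≠ 0 := by
    apply Monic.ne_zero
    monicity!
  refine ((finite_setOfPred_isRoot hq).insert 0).subset fun a ha ↦ ?_
  by_cases ha0 : a = 0
  · exact Or.inl ha0
  · right
    simp only [Set.mem_preimage, Set.mem_singleton_iff] at ha
    simp only [Set.mem_ofPred_eq, IsRoot, eval_add, eval_sub, eval_mul, eval_pow, eval_X, eval_C,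
      eval_one, ← ha]
    field_simp
    ring

theorem CharP.natCast_pow_sub_one_ne_zero {R : Type*} [Ring R] [Nontrivial R] {p : ℕ} [CharP R p]
    (hp : 0 < p) {e : ℕ} (he : e ≠ 0) : ((p ^ e - 1 : ℕ) : R) ≠ 0 := by
  rw [Nat.cast_sub (Nat.one_le_pow _ _ hp), Nat.cast_pow, CharP.cast_eq_zero, zero_pow he]
  simp

/-- Let `k` be a field of characteristic `p > 0` and `P_0 = 1`, `P_1 = t`,
`P_{n+1} = t P_n - P_{n-1}` in `k[t]`.  The set of monic irreducible factors of the
polynomials `P_{p^e - 2}` (over all `e` with `p^e ≥ 2`) is infinite. -/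
theorem stmt12 {k : Type*} [Field k] (p : ℕ) (hp : p.Prime) [CharP k p]
    (P : ℕ → Polynomial k) (hP0 : P 0 = 1) (hP1 : P 1 = Polynomial.X)
    (hPrec : ∀ n : ℕ, 1 ≤ n → P (n + 1) = Polynomial.X * P n - P (n - 1)) :
    {g : Polynomial k | g.Monic ∧ Irreducible g ∧
      ∃ e : ℕ, 2 ≤ p ^ e ∧ g ∣ P (p ^ e - 2)}.Infinite := by
  obtain rfl : P = fun n : ℕ ↦ Chebyshev.S k n := funext (Chebyshev.eq_S_of_rec hP0 hP1 hPrec)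
  set T := {g : k[X] | g.Monic ∧ Irreducible g ∧
    ∃ e : ℕ, 2 ≤ p ^ e ∧ g ∣ Chebyshev.S k ↑(p ^ e - 2)}
  intro hT
  set K := AlgebraicClosure k
  set Z : Set K := {1, -1} ∪ (fun a ↦ a + a⁻¹) ⁻¹' ⋃ g ∈ T, g.rootSet K
  have hZ : Z.Finite :=
    (Set.toFinite _).union (hT.biUnion fun g _ ↦ g.rootSet_finite K).preimage_add_inv
  have hroots (e : ℕ) (he : 2 ≤ p ^ e) : nthRootsFinset (p ^ e - 1) (1 : K) ⊆ hZ.toFinset := by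
    intro a ha
    rw [mem_nthRootsFinset (by omega)] at ha
    rw [Set.Finite.mem_toFinset]
    by_cases ha2 : a ^ 2 = 1
    · exact Or.inl (sq_eq_one_iff.mp ha2)
    have hn : p ^ e - 2 + 1 = p ^ e - 1 := by omega
    have hint : IsIntegral k (a + a⁻¹) := Algebra.IsIntegral.isIntegral _
    refine Or.inr (Set.mem_biUnion (x := minpoly k (a + a⁻¹)) ⟨minpoly.monic hint,
      minpoly.irreducible hint, e, he, Chebyshev.minpoly_add_inv_dvd_S (hn ▸ ha) ha2⟩ ?_)
    exact mem_rootSet.mpr ⟨minpoly.ne_zero hint, minpoly.aeval k _⟩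
  set e := hZ.toFinset.card + 1
  have he : 2 ≤ p ^ e := hp.two_le.trans (Nat.le_self_pow (by omega) p)
  have : NeZero ((p ^ e - 1 : ℕ) : k) := ⟨CharP.natCast_pow_sub_one_ne_zero hp.pos (by omega)⟩
  obtain ⟨ζ, hζ⟩ := HasEnoughRootsOfUnity.exists_primitiveRoot K (p ^ e - 1)
  have hcard := hζ.card_nthRootsFinset ▸ Finset.card_le_card (hroots e he)
  have := Nat.lt_pow_self (n := e) hp.one_lt
  omega
end

section
/- Let A be an ℕ-graded commutative ring generated over A_0 by nonzerodivisors t_1, …, t_n of degree 1, and let R = A[u_1, …, u_n, x_1, …, x_n]/(u_1 x_1 − t_1, …, u_n x_n − t_n). Let m_1, …, m_n be positive integers and f ∈ A homogeneous of degree r. If k_1, …, k_n are positive integers with k_i + m_i > r for all i, then (x_1^{m_1+k_1}, …, x_n^{m_n+k_n}, u_1^{m_1+k_1}, …, u_n^{m_n+k_n}) R :_{A_0} (f x_1^{k_1} ⋯ x_n^{k_n}) = (t_1^{m_1}, …, t_n^{m_n}) A :_{A_0} f. -/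
/-!
Modulo `u_i x_i = t_i`, a monomial `p u^a x^b` with `b = a + k` equals `p t^a x^k`. Collecting these
coefficients of `x^k` and taking the degree-`r` component gives an additive map `φ : A[u, x] → A`
with `φ (c f x^k) = c f`. Multiples of the relations `u_i x_i - t_i` and of `u_i^{m_i+k_i}` are sent
to `0` (the latter because `t_i^{m_i+k_i}` has degree `> r`), and multiples of `x_i^{m_i+k_i}` land
in the homogeneous ideal `(t^m)`. So `φ` maps every polynomial whose image in `R` lies in
`(x^{m+k}, u^{m+k})R` into `(t^m)`, giving `⊆`. Conversely
`t_i^{m_i} x^k = u_i^{m_i} x_i^{m_i+k_i} ∏_{j ≠ i} x_j^{k_j}` in `R`.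
-/

open MvPolynomial

def AddSubmonoid.idealCore {R : Type*} [CommSemiring R] (S : AddSubmonoid R) : Ideal R where
  carrier := {w | ∀ a, a * w ∈ S}
  add_mem' hv hw a := by simpa only [mul_add] using S.add_mem (hv a) (hw a)
  zero_mem' a := by simpa only [mul_zero] using S.zero_mem
  smul_mem' c w hw a := by simpa only [smul_eq_mul, mul_assoc] using hw (a * c)

theorem Ideal.Quotient.mk_mem_span_image_iff {R : Type*} [CommRing R] {I : Ideal R} {s : Set R}
    {x : R} :
    Ideal.Quotient.mk I x ∈ Ideal.span (Ideal.Quotient.mk I '' s) ↔ x ∈ Ideal.span s ⊔ I := by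
  rw [← Ideal.map_span, ← Ideal.mem_comap,
    Ideal.comap_map_of_surjective _ Ideal.Quotient.mk_surjective, ← RingHom.ker_eq_comap_bot,
    Ideal.mk_ker]

section XCoeff

variable {A : Type*} [CommRing A] {n : ℕ} (t : Fin n → A) (k : Fin n → ℕ)

def xCoeffWeight (d : (Fin n ⊕ Fin n) →₀ ℕ) : A :=
  if ∀ i, d (.inr i) = d (.inl i) + k i then ∏ i, t i ^ d (.inl i) else 0

noncomputable def xCoeff : MvPolynomial (Fin n ⊕ Fin n) A →ₗ[A] A :=
  (basisMonomials _ A).constr A (xCoeffWeight t k)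

theorem xCoeff_monomial (d : (Fin n ⊕ Fin n) →₀ ℕ) (p : A) :
    xCoeff t k (monomial d p) = p * xCoeffWeight t k d := by
  have h : xCoeff t k (monomial d 1) = xCoeffWeight t k d := by
    rw [xCoeff]
    simpa using (basisMonomials (Fin n ⊕ Fin n) A).constr_basis A (xCoeffWeight t k) d
  rw [← h, ← smul_eq_mul, ← map_smul, smul_monomial, smul_eq_mul, mul_one]

theorem xCoeff_C_mul_prod_X_pow (a : A) :
    xCoeff t k (C a * ∏ i, X (.inr i) ^ k i) = a := by
  simp_rw [X_pow_eq_monomial]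
  rw [← monomial_sum_one, C_mul_monomial, mul_one, xCoeff_monomial, xCoeffWeight]
  simp [Finsupp.finsetSum_apply, Finsupp.single_apply]

theorem xCoeff_mul_X_pow_mem {K : Ideal A} (v : Fin n ⊕ Fin n) (e : ℕ)
    (h : ∀ d, xCoeffWeight t k (d + Finsupp.single v e) ∈ K) (P : MvPolynomial (Fin n ⊕ Fin n) A) :
    xCoeff t k (P * X v ^ e) ∈ K := by
  induction P using induction_on' with
  | monomial d p =>
    rw [X_pow_eq_monomial, monomial_mul, mul_one, xCoeff_monomial]
    exact K.mul_mem_left p (h d)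
  | add P Q hP hQ => rw [add_mul, map_add]; exact add_mem hP hQ

theorem xCoeffWeight_add_single_inl_mem (d : (Fin n ⊕ Fin n) →₀ ℕ) (i : Fin n) (e : ℕ) :
    xCoeffWeight t k (d + Finsupp.single (.inl i) e) ∈ Ideal.span {t i ^ e} := by
  unfold xCoeffWeight
  split_ifs
  · refine Ideal.mem_span_singleton.mpr ((pow_dvd_pow _ ?_).trans
      (Finset.dvd_prod_of_mem _ (Finset.mem_univ i)))
    simp
  · exact zero_mem _

theorem xCoeffWeight_add_single_inr_mem (d : (Fin n ⊕ Fin n) →₀ ℕ) (i : Fin n) (e : ℕ) :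
    xCoeffWeight t k (d + Finsupp.single (.inr i) (e + k i)) ∈ Ideal.span {t i ^ e} := by
  unfold xCoeffWeight
  split_ifs with hd
  · refine Ideal.mem_span_singleton.mpr ((pow_dvd_pow _ ?_).trans
      (Finset.dvd_prod_of_mem _ (Finset.mem_univ i)))
    have := hd i
    simp only [Finsupp.coe_add, Pi.add_apply, Finsupp.single_eq_same, Finsupp.single_apply,
      reduceCtorEq, if_false, add_zero] at this ⊢
    omega
  · exact zero_mem _

theorem xCoeffWeight_add_single_inl_add_single_inr (d : (Fin n ⊕ Fin n) →₀ ℕ) (i : Fin n) :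
    xCoeffWeight t k (d + Finsupp.single (.inl i) 1 + Finsupp.single (.inr i) 1) =
      t i * xCoeffWeight t k d := by
  set d' : (Fin n ⊕ Fin n) →₀ ℕ := d + Finsupp.single (.inl i) 1 + Finsupp.single (.inr i) 1
  have hinl (j : Fin n) : d' (.inl j) = d (.inl j) + if i = j then 1 else 0 := by
    simp [d', Finsupp.single_apply]
  have hinr (j : Fin n) : d' (.inr j) = d (.inr j) + if i = j then 1 else 0 := by
    simp [d', Finsupp.single_apply]
  have hcond : (∀ j, d' (.inr j) = d' (.inl j) + k j) ↔ ∀ j, d (.inr j) = d (.inl j) + k j :=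
    forall_congr' fun j => by rw [hinl, hinr]; omega
  have hprod : ∏ j, t j ^ d' (.inl j) = t i * ∏ j, t j ^ d (.inl j) := by
    simp only [hinl, pow_add, Finset.prod_mul_distrib, pow_ite, pow_one, pow_zero,
      Finset.prod_ite_eq, Finset.mem_univ, if_true]
    exact mul_comm _ _
  simp only [xCoeffWeight, hcond, hprod, mul_ite, mul_zero]

theorem xCoeff_mul_relation (i : Fin n) (P : MvPolynomial (Fin n ⊕ Fin n) A) :
    xCoeff t k (P * (X (.inl i) * X (.inr i) - C (t i))) = 0 := by
  induction P using induction_on' with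
  | monomial d p =>
    rw [mul_sub, ← mul_assoc]
    simp only [X, C_apply, monomial_mul, mul_one, add_zero, map_sub, xCoeff_monomial,
      xCoeffWeight_add_single_inl_add_single_inr]
    rw [← mul_assoc, sub_self]
  | add P Q hP hQ => rw [add_mul, map_add, hP, hQ, add_zero]

end XCoeff

section Graded

open DirectSum

variable {A : Type*} [CommRing A] (𝒜 : ℕ → AddSubgroup A) [GradedRing 𝒜] {n : ℕ}
  (t : Fin n → A) (k : Fin n → ℕ) (r : ℕ)

-- The map `φ` of the header is `GradedRing.proj 𝒜 r ∘ xCoeff t k`.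
noncomputable def xCoeffCore (J : Ideal A) : Ideal (MvPolynomial (Fin n ⊕ Fin n) A) :=
  (J.toAddSubmonoid.comap ((GradedRing.proj 𝒜 r).comp (xCoeff t k).toAddMonoidHom)).idealCore

theorem mem_xCoeffCore_iff {J : Ideal A} {w : MvPolynomial (Fin n ⊕ Fin n) A} :
    w ∈ xCoeffCore 𝒜 t k r J ↔ ∀ P, (decompose 𝒜 (xCoeff t k (P * w)) r : A) ∈ J :=
  Iff.rfl

theorem span_relations_le_xCoeffCore (J : Ideal A) :
    Ideal.span (Set.range fun i => X (.inl i) * X (.inr i) - C (t i)) ≤ xCoeffCore 𝒜 t k r J := by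
  refine Ideal.span_le.mpr ?_
  rintro _ ⟨i, rfl⟩
  refine (mem_xCoeffCore_iff 𝒜 t k r).mpr fun P => ?_
  rw [xCoeff_mul_relation, decompose_zero]
  exact zero_mem J

theorem X_inr_pow_mem_xCoeffCore {J : Ideal A} (hJ : J.IsHomogeneous 𝒜) {i : Fin n} {e : ℕ}
    (hi : t i ^ e ∈ J) : X (.inr i) ^ (e + k i) ∈ xCoeffCore 𝒜 t k r J :=
  (mem_xCoeffCore_iff 𝒜 t k r).mpr fun P => hJ.mem_iff.mp
    (Ideal.span_singleton_le_iff_mem J |>.mpr hi <|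
      xCoeff_mul_X_pow_mem t k _ _ (fun d => xCoeffWeight_add_single_inr_mem t k d i e) P) r

theorem X_inl_pow_mem_xCoeffCore (J : Ideal A) {i : Fin n} (hi : t i ∈ 𝒜 1) {e : ℕ}
    (he : r < e) : X (.inl i) ^ e ∈ xCoeffCore 𝒜 t k r J := by
  refine (mem_xCoeffCore_iff 𝒜 t k r).mpr fun P => ?_
  obtain ⟨a, ha⟩ := Ideal.mem_span_singleton'.mp
    (xCoeff_mul_X_pow_mem t k _ _ (fun d => xCoeffWeight_add_single_inl_mem t k d i e) P)
  have hte : t i ^ e ∈ 𝒜 e := by simpa using SetLike.pow_mem_graded e hi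
  rw [← ha, coe_decompose_mul_of_right_mem_of_not_le 𝒜 hte (by omega)]
  exact zero_mem J

end Graded

theorem mk_C_mul_prod_X_pow_mem_span {A : Type*} [CommRing A] {n : ℕ}
    {t : Fin n → A} {I : Ideal (MvPolynomial (Fin n ⊕ Fin n) A)}
    (hI : ∀ i, X (.inl i) * X (.inr i) - C (t i) ∈ I) (m k : Fin n → ℕ) {a : A}
    (ha : a ∈ Ideal.span (Set.range fun i => t i ^ m i)) :
    Ideal.Quotient.mk I (C a * ∏ j, X (.inr j) ^ k j) ∈
      Ideal.span (Set.range fun i => Ideal.Quotient.mk I (X (.inr i) ^ (m i + k i))) := by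
  set mk := Ideal.Quotient.mk I
  suffices h : Ideal.span (Set.range fun i => t i ^ m i) ≤
      ((Ideal.span (Set.range fun i => mk (X (.inr i) ^ (m i + k i)))).colon
        {mk (∏ j, X (.inr j) ^ k j)}).comap (mk.comp C) by
    simpa [Submodule.mem_colon_singleton] using h ha
  refine Ideal.span_le.mpr ?_
  rintro _ ⟨i, rfl⟩
  have hrel : mk (C (t i)) = mk (X (.inl i) * X (.inr i)) :=
    (Ideal.Quotient.eq.mpr (hI i)).symm
  have hsplit : (X (.inl i) * X (.inr i) : MvPolynomial (Fin n ⊕ Fin n) A) ^ m i *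
      ∏ j, X (.inr j) ^ k j =
      (X (.inl i) ^ m i * ∏ j ∈ Finset.univ.erase i, X (.inr j) ^ k j) *
        X (.inr i) ^ (m i + k i) := by
    rw [← Finset.mul_prod_erase _ _ (Finset.mem_univ i)]
    ring
  rw [SetLike.mem_coe, Ideal.mem_comap, RingHom.comp_apply, Submodule.mem_colon_singleton,
    smul_eq_mul, map_pow, map_pow, hrel, ← map_pow, ← map_mul, hsplit, map_mul]
  exact Ideal.mul_mem_left _ _ (Ideal.subset_span ⟨i, rfl⟩)

theorem stmt14_general {A : Type*} [CommRing A] (𝒜 : ℕ → AddSubgroup A) [GradedRing 𝒜]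
    (n : ℕ) (t : Fin n → A) (ht : ∀ i, t i ∈ 𝒜 1)
    (m kk : Fin n → ℕ)
    (r : ℕ) (f : A) (hf : f ∈ 𝒜 r) (hkm : ∀ i, r < kk i + m i) :
    ∀ c ∈ 𝒜 0,
      (Ideal.Quotient.mk
          (Ideal.span (Set.range fun i : Fin n =>
            (X (Sum.inl i) * X (Sum.inr i) - C (t i) : MvPolynomial (Fin n ⊕ Fin n) A)))
          (C c * C f * ∏ i : Fin n, X (Sum.inr i) ^ kk i) ∈
        Ideal.span
          ((Set.range fun i : Fin n => Ideal.Quotient.mk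
              (Ideal.span (Set.range fun i : Fin n =>
                (X (Sum.inl i) * X (Sum.inr i) - C (t i) : MvPolynomial (Fin n ⊕ Fin n) A)))
              (X (Sum.inr i) ^ (m i + kk i))) ∪
            (Set.range fun i : Fin n => Ideal.Quotient.mk
              (Ideal.span (Set.range fun i : Fin n =>
                (X (Sum.inl i) * X (Sum.inr i) - C (t i) : MvPolynomial (Fin n ⊕ Fin n) A)))
              (X (Sum.inl i) ^ (m i + kk i)))))
      ↔ c * f ∈ Ideal.span (Set.range fun i : Fin n => t i ^ m i) := by
  intro c hc
  set I := Ideal.span (Set.range fun i : Fin n =>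
    (X (Sum.inl i) * X (Sum.inr i) - C (t i) : MvPolynomial (Fin n ⊕ Fin n) A))
  set J := Ideal.span (Set.range fun i => t i ^ m i)
  rw [← C_mul]
  constructor
  · intro h
    have hJ : J.IsHomogeneous 𝒜 := Ideal.homogeneous_span 𝒜 _ <| by
      rintro _ ⟨i, rfl⟩
      exact ⟨m i, by simpa using SetLike.pow_mem_graded (m i) (ht i)⟩
    set G : Set (MvPolynomial (Fin n ⊕ Fin n) A) :=
      (Set.range fun i => X (Sum.inr i) ^ (m i + kk i)) ∪
        Set.range fun i => X (Sum.inl i) ^ (m i + kk i)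
    have hG : C (c * f) * ∏ i, X (Sum.inr i) ^ kk i ∈ Ideal.span G ⊔ I := by
      refine Ideal.Quotient.mk_mem_span_image_iff.mp ?_
      rwa [Set.image_union, ← Set.range_comp, ← Set.range_comp]
    have hcore : C (c * f) * ∏ i, X (Sum.inr i) ^ kk i ∈ xCoeffCore 𝒜 t kk r J := by
      refine sup_le (Ideal.span_le.mpr ?_) (span_relations_le_xCoeffCore 𝒜 t kk r J) hG
      rintro _ (⟨i, rfl⟩ | ⟨i, rfl⟩)
      · exact X_inr_pow_mem_xCoeffCore 𝒜 t kk r hJ (Ideal.subset_span ⟨i, rfl⟩)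
      · exact X_inl_pow_mem_xCoeffCore 𝒜 t kk r J (ht i) ((hkm i).trans_eq (add_comm _ _))
    have hcf : c * f ∈ 𝒜 r := by simpa using SetLike.mul_mem_graded hc hf
    have := (mem_xCoeffCore_iff 𝒜 t kk r).mp hcore 1
    rwa [one_mul, xCoeff_C_mul_prod_X_pow, DirectSum.decompose_of_mem_same 𝒜 hcf] at this
  · exact fun h => Ideal.span_mono Set.subset_union_left
      (mk_C_mul_prod_X_pow_mem_span (fun i => Ideal.subset_span (Set.mem_range_self i)) m kk h)

/-- Let `A` be an `ℕ`-graded commutative ring generated over `A₀` by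
nonzerodivisors `t₁, …, tₙ` of degree `1`, and
`R = A[u₁,…,uₙ,x₁,…,xₙ]/(u₁x₁ - t₁, …, uₙxₙ - tₙ)` (here `u_i = X (inl i)`,
`x_i = X (inr i)`).  For positive integers `m_i`, `f ∈ A` homogeneous of degree `r`, and
positive integers `k_i` with `k_i + m_i > r`, one has
`(x₁^{m₁+k₁},…,xₙ^{mₙ+kₙ},u₁^{m₁+k₁},…,uₙ^{mₙ+kₙ})R :_{A₀} f x₁^{k₁}⋯xₙ^{kₙ}
  = (t₁^{m₁},…,tₙ^{mₙ})A :_{A₀} f`. -/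
theorem stmt14 {A : Type*} [CommRing A] (𝒜 : ℕ → AddSubgroup A) [GradedRing 𝒜]
    (n : ℕ) (t : Fin n → A) (ht : ∀ i, t i ∈ 𝒜 1)
    (htnzd : ∀ i, ∀ a : A, a * t i = 0 → a = 0)
    (hgen : Subring.closure ((𝒜 0 : Set A) ∪ Set.range t) = ⊤)
    (m kk : Fin n → ℕ) (hm : ∀ i, 1 ≤ m i) (hk : ∀ i, 1 ≤ kk i)
    (r : ℕ) (f : A) (hf : f ∈ 𝒜 r) (hkm : ∀ i, r < kk i + m i) :
    ∀ c ∈ 𝒜 0,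
      (Ideal.Quotient.mk
          (Ideal.span (Set.range fun i : Fin n =>
            (X (Sum.inl i) * X (Sum.inr i) - C (t i) : MvPolynomial (Fin n ⊕ Fin n) A)))
          (C c * C f * ∏ i : Fin n, X (Sum.inr i) ^ kk i) ∈
        Ideal.span
          ((Set.range fun i : Fin n => Ideal.Quotient.mk
              (Ideal.span (Set.range fun i : Fin n =>
                (X (Sum.inl i) * X (Sum.inr i) - C (t i) : MvPolynomial (Fin n ⊕ Fin n) A)))
              (X (Sum.inr i) ^ (m i + kk i))) ∪
            (Set.range fun i : Fin n => Ideal.Quotient.mk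
              (Ideal.span (Set.range fun i : Fin n =>
                (X (Sum.inl i) * X (Sum.inr i) - C (t i) : MvPolynomial (Fin n ⊕ Fin n) A)))
              (X (Sum.inl i) ^ (m i + kk i)))))
      ↔ c * f ∈ Ideal.span (Set.range fun i : Fin n => t i ^ m i) :=
  stmt14_general 𝒜 n t ht m kk r f hf hkm
end

section
/- Let k be a field of characteristic p > 0 and R = k[t,u,v,x,y]/(u^2 x^2 + t u x v y + v^2 y^2). Then the set ⋃_{e ≥ 1} Ass(R / (u^q, v^q, x^q, y^q)), where q = p^e, is infinite. -/
open MvPolynomial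

/-!
With `a = ux`, `b = vy` the defining equation reads `a² + b² = -t a b`, and the Lucas sequence
`U_n = U_n(-t, 1)` satisfies `U_n a b^{n-1} = a^n + U_{n-1} b^n` in `R`. Multiplying by
`(uv)^d` with `d = q - n` shows that `U_n(-t)` kills the class of `u^{d+1} v^{d+n-1} x y^{n-1}`
modulo `(u^q, v^q, x^q, y^q)`. That class is nonzero: let `z` be the class of `X` in
`k[X]/(U_n(X))`, send `t` to `-z` and weight the monomials `t^c (uv)^d (ux)^i (vy)^j` with
`i + j = n` by `(-z)^c U_j(z)`. The recursion of `U` makes this functional vanish on multiples of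
the equation, and `U_0 = U_n(z) = 0` on multiples of `u^q, …, y^q`, but it takes the value
`U_{n-1}(z) ≠ 0` on our monomial. So some associated prime of `R/(u^q, …)` with `q = p^n`
contains `U_n(-t)`. For distinct primes `n` the elements `U_n(-t)` are coprime, as
`gcd (U_m, U_n) = U_{gcd (m, n)}`, so these associated primes are pairwise distinct.
-/

/-- The hypersurface equation `u²x² + t u x v y + v²y²` in `k[t,u,v,x,y]`
(with `t = X 0`, `u = X 1`, `v = X 2`, `x = X 3`, `y = X 4`). -/
noncomputable def ssEqn (k : Type*) [Field k] : MvPolynomial (Fin 5) k :=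
  (X 1) ^ 2 * (X 3) ^ 2 + (X 0) * (X 1) * (X 3) * (X 2) * (X 4) + (X 2) ^ 2 * (X 4) ^ 2

/-- The hypersurface `R = k[t,u,v,x,y]/(u²x² + t u x v y + v²y²)`. -/
abbrev SSRing (k : Type*) [Field k] :=
  MvPolynomial (Fin 5) k ⧸ Ideal.span {ssEqn k}

/-- The Frobenius power `(u^q, v^q, x^q, y^q)` in `SSRing k`. -/
noncomputable def ssFrob (k : Type*) [Field k] (q : ℕ) : Ideal (SSRing k) :=
  Ideal.span {Ideal.Quotient.mk (Ideal.span {ssEqn k}) ((X 1) ^ q),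
    Ideal.Quotient.mk (Ideal.span {ssEqn k}) ((X 2) ^ q),
    Ideal.Quotient.mk (Ideal.span {ssEqn k}) ((X 3) ^ q),
    Ideal.Quotient.mk (Ideal.span {ssEqn k}) ((X 4) ^ q)}

-- The Lucas sequence `U_n(P, 1)`.
def lucasU {A : Type*} [CommRing A] (P : A) : ℕ → A
  | 0 => 0
  | 1 => 1
  | n + 2 => P * lucasU P (n + 1) - lucasU P n

section LucasU

variable {A : Type*} [CommRing A] (P : A)

@[simp] lemma lucasU_zero : lucasU P 0 = 0 := rfl

@[simp] lemma lucasU_one : lucasU P 1 = 1 := rfl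

lemma lucasU_add_two (n : ℕ) : lucasU P (n + 2) = P * lucasU P (n + 1) - lucasU P n := rfl

@[simp] lemma lucasU_two : lucasU P 2 = P := by simp [lucasU_add_two]

lemma map_lucasU {B : Type*} [CommRing B] (f : A →+* B) (n : ℕ) :
    f (lucasU P n) = lucasU (f P) n := by
  induction n using Nat.twoStepInduction with
  | zero => simp
  | one => simp
  | more n ih₁ ih₂ => simp [lucasU_add_two, ih₁, ih₂]

lemma lucasU_add (m n : ℕ) :
    lucasU P (m + n + 1) = lucasU P (m + 1) * lucasU P (n + 1) - lucasU P m * lucasU P n := by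
  induction m using Nat.twoStepInduction with
  | zero => simp
  | one => rw [show 1 + n + 1 = n + 2 by omega, lucasU_add_two]; simp
  | more m ih₁ ih₂ =>
    have h : lucasU P (m + 2 + n + 1) = P * lucasU P (m + 1 + n + 1) - lucasU P (m + n + 1) := by
      rw [show m + 2 + n + 1 = m + n + 1 + 2 by omega, lucasU_add_two,
        show m + n + 1 + 1 = m + 1 + n + 1 by omega]
    rw [h, ih₁, ih₂, lucasU_add_two P (m + 1), show m + 1 + 1 = m + 2 from rfl,
      lucasU_add_two P m]
    ring

lemma isCoprime_lucasU_succ (n : ℕ) : IsCoprime (lucasU P n) (lucasU P (n + 1)) := by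
  induction n with
  | zero => exact isCoprime_zero_left.mpr isUnit_one
  | succ n ih =>
    rw [lucasU_add_two, sub_eq_neg_add, mul_comm]
    exact ih.symm.neg_right.add_mul_left_right P

lemma isCoprime_lucasU_add {m n : ℕ} (h : IsCoprime (lucasU P m) (lucasU P n)) :
    IsCoprime (lucasU P m) (lucasU P (m + n)) := by
  cases n with
  | zero => exact isCoprime_self.mpr (isCoprime_zero_right.mp h)
  | succ n =>
    rw [← add_assoc, lucasU_add, sub_eq_add_neg, neg_mul_eq_mul_neg]
    exact ((isCoprime_lucasU_succ P m).mul_right h).add_mul_left_right _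

lemma isCoprime_lucasU_mul_add {m r : ℕ} (h : IsCoprime (lucasU P m) (lucasU P r)) (j : ℕ) :
    IsCoprime (lucasU P m) (lucasU P (m * j + r)) := by
  induction j with
  | zero => simpa using h
  | succ j ih =>
    rw [Nat.mul_succ, show m * j + m + r = m + (m * j + r) by ring]
    exact isCoprime_lucasU_add P ih

lemma isCoprime_lucasU {m n : ℕ} (h : Nat.Coprime m n) :
    IsCoprime (lucasU P m) (lucasU P n) := by
  induction m, n using Nat.gcd.induction with
  | H0 n =>
    obtain rfl : n = 1 := by simpa [Nat.Coprime] using h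
    exact isCoprime_lucasU_succ P 0
  | H1 m n _ ih =>
    have := isCoprime_lucasU_mul_add P (ih (by rwa [Nat.Coprime, ← Nat.gcd_rec])).symm (n / m)
    rwa [Nat.div_add_mod] at this

lemma lucasU_succ_mul_mul_pow {a b : A} (h : a ^ 2 + b ^ 2 = P * a * b) (n : ℕ) :
    lucasU P (n + 1) * a * b ^ n = a ^ (n + 1) + lucasU P n * b ^ (n + 1) := by
  induction n with
  | zero => simp
  | succ n ih =>
    rw [lucasU_add_two]
    linear_combination a * ih - lucasU P (n + 1) * b ^ n * h

lemma degree_lucasU_X {R : Type*} [CommRing R] [Nontrivial R] (n : ℕ) :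
    (lucasU (Polynomial.X : Polynomial R) (n + 1)).degree = n := by
  induction n using Nat.twoStepInduction with
  | zero => simp
  | one => simp
  | more n ih₁ ih₂ =>
    have h : (Polynomial.X * lucasU Polynomial.X (n + 2) : Polynomial R).degree = ↑(n + 2) := by
      rw [Polynomial.X_mul, Polynomial.degree_mul_X, ih₂]
      norm_cast
    rw [show n + 2 + 1 = n + 1 + 2 from rfl, lucasU_add_two,
      Polynomial.degree_sub_eq_left_of_degree_lt, h]
    rw [h, ih₁]
    exact_mod_cast (by omega : n < n + 2)

end LucasU

lemma infinite_of_forall_prime_lucasU_mem {A : Type*} [CommRing A] (c : A)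
    {S : Set (Ideal A)} (hS : ∀ Q ∈ S, Q ≠ ⊤) (h : ∀ ℓ : ℕ, ℓ.Prime → ∃ Q ∈ S, lucasU c ℓ ∈ Q) :
    S.Infinite := by
  choose! F hFS hF using h
  refine Set.infinite_of_injOn_mapsTo (f := F) (fun ℓ hℓ ℓ' hℓ' hF' => ?_) hFS
    Nat.infinite_setOfPred_prime
  by_contra hne
  obtain ⟨a, b, hab⟩ := isCoprime_lucasU c ((Nat.coprime_primes hℓ hℓ').mpr hne)
  refine hS _ (hFS ℓ hℓ) ((F ℓ).eq_top_of_isUnit_mem ?_ isUnit_one)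
  rw [← hab]
  exact add_mem (Ideal.mul_mem_left _ _ (hF ℓ hℓ)) (Ideal.mul_mem_left _ _ (hF' ▸ hF ℓ' hℓ'))

lemma exists_mem_associatedPrimes_of_mul_mem {A : Type*} [CommRing A] [IsNoetherianRing A]
    {I : Ideal A} {a r : A} (ha : a ∉ I) (hra : r * a ∈ I) :
    ∃ Q ∈ associatedPrimes A (A ⧸ I), r ∈ Q := by
  have hx : (Ideal.Quotient.mk I a) ≠ 0 := by rwa [Ne, Ideal.Quotient.eq_zero_iff_mem]
  obtain ⟨Q, hQ, hle⟩ := exists_le_isAssociatedPrime_of_isNoetherianRing A _ hx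
  refine ⟨Q, hQ, hle ?_⟩
  rwa [Submodule.mem_colon_singleton, Submodule.mem_bot, Algebra.smul_def,
    Ideal.Quotient.algebraMap_eq, ← map_mul, Ideal.Quotient.eq_zero_iff_mem]

lemma apply_eq_zero_of_mem_span {A M F : Type*} [CommSemiring A] [AddCommMonoid M]
    [FunLike F A M] [AddMonoidHomClass F A M] (θ : F) {S : Set A}
    (hS : ∀ s ∈ S, ∀ a, θ (a * s) = 0) {x : A} (hx : x ∈ Ideal.span S) : θ x = 0 := by
  suffices ∀ a, θ (a * x) = 0 by simpa using this 1
  induction hx using Submodule.span_induction with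
  | mem s hs => exact hS s hs
  | zero => simp
  | add y z _ _ hy hz => intro a; simp [mul_add, hy, hz]
  | smul b y _ hy => intro a; rw [smul_eq_mul, ← mul_assoc]; exact hy _

lemma MvPolynomial.linearMap_mul_eq_zero_of_monomial {σ R M : Type*} [CommSemiring R]
    [AddCommMonoid M] [Module R M] (θ : MvPolynomial σ R →ₗ[R] M) {g : MvPolynomial σ R}
    (h : ∀ e, θ (monomial e 1 * g) = 0) (a : MvPolynomial σ R) : θ (a * g) = 0 := by
  induction a using MvPolynomial.induction_on' with
  | monomial e c =>
    rw [show monomial e c = c • monomial e 1 by rw [smul_monomial, smul_eq_mul, mul_one],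
      smul_mul_assoc, map_smul, h, smul_zero]
  | add a b ha hb => rw [add_mul, map_add, ha, hb, add_zero]

section Hypersurface

variable {k : Type*} [Field k]

noncomputable def ssVar (k : Type*) [Field k] (i : Fin 5) : SSRing k :=
  Ideal.Quotient.mk _ (X i)

lemma ssFrob_eq_span (q : ℕ) :
    ssFrob k q = Ideal.span {ssVar k 1 ^ q, ssVar k 2 ^ q, ssVar k 3 ^ q, ssVar k 4 ^ q} := by
  simp only [ssFrob, ssVar, map_pow]

lemma comap_ssFrob (q : ℕ) :
    (ssFrob k q).comap (Ideal.Quotient.mk _) =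
      Ideal.span ({X 1 ^ q, X 2 ^ q, X 3 ^ q, X 4 ^ q} ∪ {ssEqn k}) := by
  have h := Ideal.comap_map_of_surjective' (Ideal.Quotient.mk (Ideal.span {ssEqn k}))
    Ideal.Quotient.mk_surjective
    (Ideal.span {X 1 ^ q, X 2 ^ q, X 3 ^ q, X 4 ^ q} : Ideal (MvPolynomial (Fin 5) k))
  rw [Ideal.mk_ker, Ideal.map_span] at h
  rw [Ideal.span_union, ← h]
  simp only [ssFrob, Set.image_insert_eq, Set.image_singleton]

lemma ssVar_sq_add_sq :
    (ssVar k 1 * ssVar k 3) ^ 2 + (ssVar k 2 * ssVar k 4) ^ 2 =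
      -ssVar k 0 * (ssVar k 1 * ssVar k 3) * (ssVar k 2 * ssVar k 4) := by
  have h : Ideal.Quotient.mk (Ideal.span {ssEqn k})
      (X 1 ^ 2 * X 3 ^ 2 + X 0 * X 1 * X 3 * X 2 * X 4 + X 2 ^ 2 * X 4 ^ 2) = 0 :=
    Ideal.Quotient.eq_zero_iff_mem.mpr (Ideal.mem_span_singleton_self _)
  simp only [map_add, map_mul, map_pow] at h
  simp only [ssVar]
  linear_combination h

lemma lucasU_mul_mem_ssFrob (d m : ℕ) :
    lucasU (-ssVar k 0) (m + 1) *
        (ssVar k 1 ^ (d + 1) * ssVar k 2 ^ (d + m) * ssVar k 3 * ssVar k 4 ^ m) ∈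
      ssFrob k (d + (m + 1)) := by
  have key := lucasU_succ_mul_mul_pow _ (ssVar_sq_add_sq (k := k)) m
  have h : lucasU (-ssVar k 0) (m + 1) *
        (ssVar k 1 ^ (d + 1) * ssVar k 2 ^ (d + m) * ssVar k 3 * ssVar k 4 ^ m) =
      ssVar k 1 ^ (d + (m + 1)) * (ssVar k 2 ^ d * ssVar k 3 ^ (m + 1)) +
        ssVar k 2 ^ (d + (m + 1)) *
          (lucasU (-ssVar k 0) m * ssVar k 1 ^ d * ssVar k 4 ^ (m + 1)) := by
    linear_combination (ssVar k 1 * ssVar k 2) ^ d * key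
  rw [h, ssFrob_eq_span]
  exact add_mem (Ideal.mul_mem_right _ _ (Ideal.subset_span (by simp)))
    (Ideal.mul_mem_right _ _ (Ideal.subset_span (by simp)))

variable {K : Type*} [CommRing K] [Algebra k K]

-- The condition on `e` says that it is the exponent of `t^c (uv)^d (ux)^i (vy)^j`, `i + j = n`.
def frobWeight (P : K) (d n : ℕ) (e : Fin 5 →₀ ℕ) : K :=
  if e 1 = d + e 3 ∧ e 2 = d + e 4 ∧ e 3 + e 4 = n then (-P) ^ e 0 * lucasU P (e 4) else 0

noncomputable def frobFunctional (P : K) (d n : ℕ) : MvPolynomial (Fin 5) k →ₗ[k] K :=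
  (basisMonomials (Fin 5) k).constr k (frobWeight P d n)

variable (P : K) (d n : ℕ)

lemma frobFunctional_monomial (e : Fin 5 →₀ ℕ) :
    frobFunctional P d n (monomial e (1 : k)) = frobWeight P d n e := by
  simpa [frobFunctional] using (basisMonomials (Fin 5) k).constr_basis k (frobWeight P d n) e

lemma frobWeight_add_single (hP : lucasU P n = 0) {i : Fin 5} (hi : i ≠ 0) (e : Fin 5 →₀ ℕ) :
    frobWeight P d n (e + Finsupp.single i (d + n)) = 0 := by
  set q := d + n with hq
  rw [frobWeight, ite_eq_right_iff]
  intro h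
  have : (e + Finsupp.single i q) 4 = 0 ∨ (e + Finsupp.single i q) 4 = n := by
    fin_cases i <;>
      simp only [Fin.isValue, Finsupp.coe_add, Pi.add_apply, Finsupp.single_eq_same, ne_eq,
        Fin.reduceEq, not_false_eq_true, Finsupp.single_eq_of_ne, add_zero, not_true_eq_false,
        Fin.zero_eta, Fin.mk_one, Fin.reduceFinMk] at h hi ⊢ <;> omega
  rcases this with h0 | h0 <;> rw [h0] <;> simp [hP]

lemma frobFunctional_monomial_mul_ssEqn (e : Fin 5 →₀ ℕ) :
    frobFunctional P d n (monomial e (1 : k) * ssEqn k) = 0 := by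
  simp only [ssEqn, X, monomial_pow, monomial_mul, mul_add, map_add, one_pow, mul_one,
    frobFunctional_monomial, frobWeight, Finsupp.smul_single, smul_eq_mul, Finsupp.coe_add,
    Pi.add_apply, Finsupp.single_eq_same, Finsupp.single_eq_of_ne, ne_eq, Fin.isValue,
    Fin.reduceEq, not_false_eq_true, add_zero, zero_add]
  by_cases h : e 1 = d + e 3 ∧ e 2 = d + e 4 ∧ e 3 + e 4 + 2 = n
  · rw [if_pos (by omega), if_pos (by omega), if_pos (by omega), lucasU_add_two]
    ring
  · rw [if_neg (by omega), if_neg (by omega), if_neg (by omega), add_zero, add_zero]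

lemma frobFunctional_eq_zero_of_mem (hP : lucasU P n = 0) {w : MvPolynomial (Fin 5) k}
    (hw : w ∈ (ssFrob k (d + n)).comap (Ideal.Quotient.mk _)) :
    frobFunctional P d n w = 0 := by
  rw [comap_ssFrob] at hw
  refine apply_eq_zero_of_mem_span _ (fun s hs => ?_) hw
  refine MvPolynomial.linearMap_mul_eq_zero_of_monomial _ fun e => ?_
  simp only [Set.union_singleton, Set.mem_insert_iff, Set.mem_singleton_iff] at hs
  rcases hs with rfl | rfl | rfl | rfl | rfl
  · exact frobFunctional_monomial_mul_ssEqn P d n e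
  all_goals
    rw [X_pow_eq_monomial, monomial_mul, mul_one, frobFunctional_monomial]
    exact frobWeight_add_single P d n hP (by decide) e

lemma ssMonomial_not_mem_ssFrob {m : ℕ} (hP : lucasU P (m + 1) = 0) (hP' : lucasU P m ≠ 0) :
    ssVar k 1 ^ (d + 1) * ssVar k 2 ^ (d + m) * ssVar k 3 * ssVar k 4 ^ m ∉
      ssFrob k (d + (m + 1)) := by
  intro hmem
  set e : Fin 5 →₀ ℕ := Finsupp.single 1 (d + 1) + Finsupp.single 2 (d + m) +
    Finsupp.single 3 1 + Finsupp.single 4 m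
  have he : ssVar k 1 ^ (d + 1) * ssVar k 2 ^ (d + m) * ssVar k 3 * ssVar k 4 ^ m =
      Ideal.Quotient.mk _ (monomial e (1 : k)) := by
    simp only [e, ssVar, ← map_pow, ← map_mul, X, monomial_pow, monomial_mul,
      Finsupp.smul_single, smul_eq_mul, mul_one, one_pow]
  rw [he] at hmem
  have := frobFunctional_eq_zero_of_mem P d (m + 1) hP hmem
  rw [frobFunctional_monomial] at this
  exact hP' (by simpa [frobWeight, e, add_comm 1 m] using this)

end Hypersurface

lemma exists_associatedPrime_ssFrob_lucasU_mem {k : Type*} [Field k] {p : ℕ} (hp : 1 < p)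
    (m : ℕ) : ∃ Q ∈ associatedPrimes (SSRing k) (SSRing k ⧸ ssFrob k (p ^ (m + 2))),
      lucasU (-ssVar k 0) (m + 2) ∈ Q := by
  set g := lucasU (Polynomial.X : Polynomial k) (m + 2)
  have : Nontrivial (AdjoinRoot g) := AdjoinRoot.nontrivial g (by
    rw [show g = lucasU _ (m + 1 + 1) from rfl, degree_lucasU_X]
    exact_mod_cast m.succ_ne_zero)
  have hz : lucasU (AdjoinRoot.root g) (m + 2) = 0 := by
    rw [← AdjoinRoot.mk_X, ← map_lucasU, AdjoinRoot.mk_self]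
  have hz' : lucasU (AdjoinRoot.root g) (m + 1) ≠ 0 :=
    (isCoprime_zero_right.mp (hz ▸ isCoprime_lucasU_succ _ (m + 1))).ne_zero
  obtain ⟨d, hd⟩ : ∃ d, p ^ (m + 2) = d + (m + 2) :=
    ⟨p ^ (m + 2) - (m + 2), by have := Nat.lt_pow_self (n := m + 2) hp; omega⟩
  rw [hd]
  exact exists_mem_associatedPrimes_of_mul_mem
    (ssMonomial_not_mem_ssFrob (k := k) _ d hz hz') (lucasU_mul_mem_ssFrob d (m + 1))

theorem stmt16_general {k : Type*} [Field k] (p : ℕ) (hp : p.Prime) :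
    Set.Infinite {Q : Ideal (SSRing k) |
      ∃ e : ℕ, 1 ≤ e ∧ Q ∈ associatedPrimes (SSRing k) (SSRing k ⧸ ssFrob k (p ^ e))} := by
  refine infinite_of_forall_prime_lucasU_mem (-ssVar k 0) ?_ fun ℓ hℓ => ?_
  · rintro Q ⟨e, -, hQ⟩
    exact hQ.isPrime.ne_top
  · obtain ⟨m, rfl⟩ : ∃ m, ℓ = m + 2 := ⟨ℓ - 2, by have := hℓ.two_le; omega⟩
    obtain ⟨Q, hQ, hmem⟩ := exists_associatedPrime_ssFrob_lucasU_mem (k := k) hp.one_lt m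
    exact ⟨Q, ⟨m + 2, by omega, hQ⟩, hmem⟩

/-- For `R = k[t,u,v,x,y]/(u²x² + t u x v y + v²y²)` over a field of prime
characteristic `p`, the union over `e ≥ 1` of the associated primes of
`R/(u^q, v^q, x^q, y^q)` with `q = p^e` is infinite. -/
theorem stmt16 {k : Type*} [Field k] (p : ℕ) (hp : p.Prime) [CharP k p] :
    Set.Infinite {Q : Ideal (SSRing k) |
      ∃ e : ℕ, 1 ≤ e ∧ Q ∈ associatedPrimes (SSRing k) (SSRing k ⧸ ssFrob k (p ^ e))} :=
  stmt16_general p hp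
end
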